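/- arXiv:1608.03546 — 10 statements merged into one kernel-verified Lean document; each statement's English description precedes it below -/
import Mathlib

section
/- Let G be a group, let M be a vast subset of G, and let n be a positive integer. Then there exists a positive integer m such that for every subset P of G with |P| ≥ m there is a subset Q of P with |Q| = n and Q⁻¹Q ⊆ M. -/
/-!
Join `a ≠ b` by an edge when `a⁻¹b ∈ M` and `b⁻¹a ∈ M`. Condition `Φ_k` forbids independent
`k`-sets in this graph, so by Ramsey's theorem every large enough finite set contains an
`n`-clique `Q`, and then `Q⁻¹Q ⊆ M` as soon as `1 ∈ M`, which `Φ_k` also provides.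
-/

open Pointwise

/-- Condition `Φ_m`: for every `m`-element subset `P` of `G` there exist two distinct
elements `a, b ∈ P` such that `{a,b}⁻¹{a,b} ⊆ M`, i.e. `1 ∈ M`, `a⁻¹b ∈ M`, `b⁻¹a ∈ M`. -/
def PhiCond {G : Type*} [Group G] (m : ℕ) (M : Set G) : Prop :=
  ∀ P : Finset G, P.card = m → ∃ a ∈ P, ∃ b ∈ P, a ≠ b ∧
    (1 : G) ∈ M ∧ a⁻¹ * b ∈ M ∧ b⁻¹ * a ∈ M

/-- `M` is vast if it satisfies `Φ_m` for some positive integer `m`. -/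
def IsVast {G : Type*} [Group G] (M : Set G) : Prop := ∃ m : ℕ, 0 < m ∧ PhiCond m M

open Finset

theorem Set.exists_finset_subset_card_eq {α : Type*} {s : Set α} {n : ℕ}
    (hn : (n : ℕ∞) ≤ s.encard) : ∃ t : Finset α, ↑t ⊆ s ∧ #t = n := by
  obtain ⟨t, hts, ht⟩ := Set.exists_subset_encard_eq hn
  obtain ⟨t, rfl⟩ := (Set.finite_of_encard_eq_coe ht).exists_finset_coe
  exact ⟨t, hts, by simpa using ht⟩

namespace SimpleGraph

variable {V : Type*} [DecidableEq V]

theorem exists_isNClique_succ {G : SimpleGraph V} {P Q : Finset V} {x : V} {n : ℕ}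
    (hx : x ∈ P) (hQP : Q ⊆ P) (hQ : G.IsNClique n Q) (hxQ : ∀ y ∈ Q, G.Adj x y) :
    ∃ Q' ⊆ P, G.IsNClique (n + 1) Q' :=
  ⟨insert x Q, insert_subset hx hQP, hQ.insert hxQ⟩

theorem exists_ramsey_bound (s t : ℕ) : ∃ N : ℕ, ∀ (G : SimpleGraph V) (P : Finset V),
    N ≤ #P → (∃ Q ⊆ P, G.IsNClique s Q) ∨ ∃ Q ⊆ P, Gᶜ.IsNClique t Q := by
  induction s generalizing t with
  | zero => exact ⟨0, fun G P _ => Or.inl ⟨∅, empty_subset _, by simp⟩⟩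
  | succ s ihs =>
    induction t with
    | zero => exact ⟨0, fun G P _ => Or.inr ⟨∅, empty_subset _, by simp⟩⟩
    | succ t iht =>
      classical
      obtain ⟨N₁, hN₁⟩ := ihs (t + 1)
      obtain ⟨N₂, hN₂⟩ := iht
      refine ⟨N₁ + N₂ + 1, fun G P hP => ?_⟩
      obtain ⟨x, hx⟩ : P.Nonempty := card_pos.mp (by omega)
      set A := (P.erase x).filter (G.Adj x)
      set B := (P.erase x).filter (fun y => ¬ G.Adj x y)
      have hAP : A ⊆ P := (filter_subset _ _).trans (erase_subset _ _)
      have hBP : B ⊆ P := (filter_subset _ _).trans (erase_subset _ _)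
      have hAB : #A + #B + 1 = #P := by
        rw [card_filter_add_card_filter_not, card_erase_add_one hx]
      by_cases hA : N₁ ≤ #A
      · rcases hN₁ G A hA with ⟨Q, hQA, hQ⟩ | ⟨Q, hQA, hQ⟩
        · exact Or.inl <| exists_isNClique_succ hx (hQA.trans hAP) hQ
            fun y hy => (mem_filter.1 (hQA hy)).2
        · exact Or.inr ⟨Q, hQA.trans hAP, hQ⟩
      · rcases hN₂ G B (by omega) with ⟨Q, hQB, hQ⟩ | ⟨Q, hQB, hQ⟩
        · exact Or.inl ⟨Q, hQB.trans hBP, hQ⟩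
        · refine Or.inr <| exists_isNClique_succ hx (hQB.trans hBP) hQ fun y hy => ?_
          obtain ⟨hyx, hxy⟩ := mem_filter.1 (hQB hy)
          exact (compl_adj G x y).2 ⟨(ne_of_mem_erase hyx).symm, hxy⟩

end SimpleGraph

section

variable {G : Type*} [Group G] {M : Set G}

def invMulGraph (M : Set G) : SimpleGraph G where
  Adj a b := a ≠ b ∧ a⁻¹ * b ∈ M ∧ b⁻¹ * a ∈ M
  symm := ⟨fun _ _ h => ⟨h.1.symm, h.2.2, h.2.1⟩⟩
  loopless := ⟨fun _ h => h.1 rfl⟩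

theorem inv_mul_subset_of_isClique (h1 : (1 : G) ∈ M) {Q : Set G}
    (hQ : (invMulGraph M).IsClique Q) : Q⁻¹ * Q ⊆ M := by
  rintro _ ⟨a, ha, b, hb, rfl⟩
  rw [Set.mem_inv] at ha
  by_cases hab : a⁻¹ = b
  · simpa [← hab] using h1
  · simpa using (hQ ha hb hab).2.1

theorem PhiCond.one_mem {m : ℕ} (h : PhiCond m M) {P : Finset G} (hP : m ≤ #P) : (1 : G) ∈ M := by
  obtain ⟨Q, -, hQ⟩ := exists_subset_card_eq hP
  obtain ⟨-, -, -, -, -, h1, -⟩ := h Q hQ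
  exact h1

theorem PhiCond.not_compl_isNClique {m : ℕ} (h : PhiCond m M) (Q : Finset G) :
    ¬ (invMulGraph M)ᶜ.IsNClique m Q := fun hQ => by
  obtain ⟨a, ha, b, hb, hab, -, hab', hba⟩ := h Q hQ.card_eq
  exact ((SimpleGraph.compl_adj _ a b).1 (hQ.isClique ha hb hab)).2 ⟨hab, hab', hba⟩

end

theorem stmt_0_general {G : Type*} [Group G] (M : Set G) (hM : IsVast M)
    (n : ℕ) :
    ∃ m : ℕ, 0 < m ∧ ∀ P : Set G, (m : ℕ∞) ≤ P.encard →
      ∃ Q : Set G, Q ⊆ P ∧ Q.encard = (n : ℕ∞) ∧ Q⁻¹ * Q ⊆ M := by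
  classical
  obtain ⟨k, hk0, hk⟩ := hM
  obtain ⟨N, hN⟩ := SimpleGraph.exists_ramsey_bound (V := G) n k
  refine ⟨N + k, by omega, fun P hP => ?_⟩
  obtain ⟨T, hTP, hT⟩ := Set.exists_finset_subset_card_eq hP
  have h1 : (1 : G) ∈ M := hk.one_mem (P := T) (by omega)
  rcases hN (invMulGraph M) T (by omega) with ⟨Q, hQT, hQ⟩ | ⟨Q, -, hQ⟩
  · exact ⟨Q, (coe_subset.2 hQT).trans hTP, by simp [hQ.card_eq],
      inv_mul_subset_of_isClique h1 hQ.isClique⟩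
  · exact absurd hQ (hk.not_compl_isNClique Q)

theorem stmt_0 {G : Type*} [Group G] [Infinite G] (M : Set G) (hM : IsVast M)
    (n : ℕ) (hn : 0 < n) :
    ∃ m : ℕ, 0 < m ∧ ∀ P : Set G, (m : ℕ∞) ≤ P.encard →
      ∃ Q : Set G, Q ⊆ P ∧ Q.encard = (n : ℕ∞) ∧ Q⁻¹ * Q ⊆ M :=
  stmt_0_general M hM n
end

section
/- Let G be a group with identity e, let M be a vast subset of G, and let S ⊆ G. Then there exist finite sets Q, R ⊆ S with |Q| < J_M and |R| < J_M such that S ⊆ QM and S ⊆ MR. Moreover, M is syndetic and I_M < J_M. -/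
/-!
Call `a, b` related when `a⁻¹b, b⁻¹a ∈ M`. A pairwise unrelated subset of `S` has fewer than
`J_M` elements by `Φ_{J_M}`, so one of maximal size exists, and by maximality every `s ∈ S`
is related to one of its elements `a`, i.e. `s = a (a⁻¹s) ∈ aM`, or lies in it, and then
`s ∈ sM` because `1 ∈ M` (as `G` is infinite, `Φ_m` is not vacuous). Applying this to `M⁻¹`
(which satisfies the same `Φ_m`) and `S⁻¹` gives the right cover, and `S = G` gives
syndeticity.
-/

open Pointwise

/-- `J_M`: the least positive `m` such that `M` satisfies `Φ_m`. -/
noncomputable def JVast {G : Type*} [Group G] (M : Set G) : ℕ :=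
  sInf {m : ℕ | 0 < m ∧ PhiCond m M}

/-- `S` is syndetic if `T * S = G` for some finite `T ⊆ G`. -/
def IsSyndetic {G : Type*} [Group G] (S : Set G) : Prop :=
  ∃ T : Finset G, (T : Set G) * S = Set.univ

/-- `I_S`: the least cardinality of a finite set `T` with `T * S = G`. -/
noncomputable def ISynd {G : Type*} [Group G] (S : Set G) : ℕ :=
  sInf {n : ℕ | ∃ T : Finset G, T.card = n ∧ (T : Set G) * S = Set.univ}

section Domination

variable {α : Type*} {r : α → α → Prop} {J : ℕ}

lemma card_lt_of_pairwise_not_rel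
    (hJ : ∀ P : Finset α, P.card = J → ∃ a ∈ P, ∃ b ∈ P, a ≠ b ∧ r a b)
    {Q : Finset α} (hQ : (Q : Set α).Pairwise fun a b => ¬ r a b) : Q.card < J := by
  by_contra! h
  obtain ⟨P, hPQ, hP⟩ := Finset.exists_subset_card_eq h
  obtain ⟨a, ha, b, hb, hab, hr⟩ := hJ P hP
  exact hQ (hPQ ha) (hPQ hb) hab hr

lemma exists_finset_subset_card_lt_dominating (hr : ∀ ⦃a b⦄, r a b → r b a)
    (hJ : ∀ P : Finset α, P.card = J → ∃ a ∈ P, ∃ b ∈ P, a ≠ b ∧ r a b) (S : Set α) :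
    ∃ Q : Finset α, (Q : Set α) ⊆ S ∧ Q.card < J ∧ ∀ s ∈ S, s ∈ Q ∨ ∃ a ∈ Q, r a s := by
  classical
  obtain ⟨Q, ⟨hQS, hQ⟩, hmax⟩ := (measure fun Q : Finset α => J - Q.card).wf.has_min
    {Q | (Q : Set α) ⊆ S ∧ (Q : Set α).Pairwise fun a b => ¬ r a b} ⟨∅, by simp⟩
  have hQJ := card_lt_of_pairwise_not_rel hJ hQ
  refine ⟨Q, hQS, hQJ, fun s hs => ?_⟩
  by_contra! ⟨hsQ, hsr⟩
  refine hmax (insert s Q) ⟨?_, ?_⟩ ?_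
  · simpa [Set.insert_subset_iff] using ⟨hs, hQS⟩
  · rw [Finset.coe_insert]
    exact hQ.insert fun a ha _ => ⟨fun h => hsr a ha (hr h), hsr a ha⟩
  · change J - (insert s Q).card < J - Q.card
    rw [Finset.card_insert_of_notMem hsQ]
    omega

end Domination

namespace PhiCond

variable {G : Type*} [Group G] {m : ℕ} {M : Set G}

lemma one_mem_s2 [Infinite G] (h : PhiCond m M) : (1 : G) ∈ M := by
  obtain ⟨P, hP⟩ := Infinite.exists_subset_card_eq G m
  obtain ⟨-, -, -, -, -, h1, -⟩ := h P hP
  exact h1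

lemma inv (h : PhiCond m M) : PhiCond m M⁻¹ := by
  intro P hP
  obtain ⟨a, ha, b, hb, hab, h1, hab', hba'⟩ := h P hP
  exact ⟨a, ha, b, hb, hab, by simpa using h1, by simpa using hba', by simpa using hab'⟩

lemma exists_finset_subset_subset_mul [Infinite G] (h : PhiCond m M) (S : Set G) :
    ∃ Q : Finset G, (Q : Set G) ⊆ S ∧ Q.card < m ∧ S ⊆ (Q : Set G) * M := by
  obtain ⟨Q, hQS, hQm, hdom⟩ := exists_finset_subset_card_lt_dominating
    (r := fun a b => a⁻¹ * b ∈ M ∧ b⁻¹ * a ∈ M) (fun _ _ => And.symm)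
    (fun P hP => by
      obtain ⟨a, ha, b, hb, hab, -, hr⟩ := h P hP
      exact ⟨a, ha, b, hb, hab, hr⟩) S
  refine ⟨Q, hQS, hQm, fun s hs => ?_⟩
  rcases hdom s hs with hsQ | ⟨a, ha, has, -⟩
  · exact ⟨s, hsQ, 1, h.one_mem_s2, mul_one s⟩
  · exact ⟨a, ha, a⁻¹ * s, has, mul_inv_cancel_left a s⟩

lemma exists_finset_subset_subset_mul_right [Infinite G] (h : PhiCond m M) (S : Set G) :
    ∃ R : Finset G, (R : Set G) ⊆ S ∧ R.card < m ∧ S ⊆ M * (R : Set G) := by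
  classical
  obtain ⟨Q, hQS, hQm, hSQ⟩ := h.inv.exists_finset_subset_subset_mul S⁻¹
  refine ⟨Q⁻¹, ?_, by rwa [Finset.card_inv], ?_⟩
  · rw [Finset.coe_inv]
    exact Set.inv_subset.mpr hQS
  · rw [Finset.coe_inv]
    simpa [mul_inv_rev] using Set.inv_subset.mp hSQ

end PhiCond

lemma IsVast.phiCond_jVast {G : Type*} [Group G] {M : Set G} (h : IsVast M) :
    PhiCond (JVast M) M :=
  (Nat.sInf_mem h).2

theorem stmt_2 {G : Type*} [Group G] [Infinite G] (M : Set G) (hM : IsVast M)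
    (S : Set G) :
    (∃ Q R : Finset G, (Q : Set G) ⊆ S ∧ (R : Set G) ⊆ S ∧
      Q.card < JVast M ∧ R.card < JVast M ∧
      S ⊆ (Q : Set G) * M ∧ S ⊆ M * (R : Set G)) ∧
    IsSyndetic M ∧ ISynd M < JVast M := by
  have hJ := hM.phiCond_jVast
  obtain ⟨Q, hQS, hQ, hSQ⟩ := hJ.exists_finset_subset_subset_mul S
  obtain ⟨R, hRS, hR, hSR⟩ := hJ.exists_finset_subset_subset_mul_right S
  obtain ⟨T, -, hT, hTM⟩ := hJ.exists_finset_subset_subset_mul Set.univ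
  have hTM : (T : Set G) * M = Set.univ := Set.univ_subset_iff.mp hTM
  have hIT : ISynd M ≤ T.card := Nat.sInf_le ⟨T, rfl, hTM⟩
  exact ⟨⟨Q, R, hQS, hRS, hQ, hR, hSQ, hSR⟩, ⟨T, hTM⟩, hIT.trans_lt hT⟩
end

section
/- If a subset S of a group G is syndetic, then S⁻¹S is vast in G and J_{S⁻¹S} ≤ I_S + 1. -/
open Pointwise

/-! Pigeonhole: if `T * S = G` and `P` has more than `|T|` elements, two distinct `a, b ∈ P` lie
in the same translate `t * S`, and then `a⁻¹ * b = s⁻¹ * s'` with `s, s' ∈ S`. -/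

namespace Set

variable {G : Type*} [Group G]

theorem inv_mul_mul_mem_inv_mul {S : Set G} (t : G) {s s' : G} (hs : s ∈ S) (hs' : s' ∈ S) :
    (t * s)⁻¹ * (t * s') ∈ S⁻¹ * S := by
  rw [mul_inv_rev, mul_assoc, inv_mul_cancel_left]
  exact mul_mem_mul (inv_mem_inv.mpr hs) hs'

theorem one_mem_inv_mul_self {S : Set G} (hS : S.Nonempty) : (1 : G) ∈ S⁻¹ * S :=
  one_mem_inv_mul_iff.mpr (not_disjoint_iff_nonempty_inter.mpr (by rwa [inter_self]))

end Set

open Set in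
theorem phiCond_inv_mul_of_mul_eq_univ {G : Type*} [Group G] {S : Set G} {T : Finset G}
    (hT : (T : Set G) * S = univ)
    {m : ℕ} (hm : T.card < m) : PhiCond m (S⁻¹ * S) := by
  intro P hP
  have hcover : ∀ p : G, ∃ t ∈ T, ∃ s ∈ S, t * s = p := fun p => by
    simpa only [← hT, mem_mul, Finset.mem_coe] using mem_univ p
  choose f hfT g hgS hfg using hcover
  obtain ⟨a, ha, b, hb, hab, hfab⟩ :=
    Finset.exists_ne_map_eq_of_card_lt_of_maps_to (hP ▸ hm) fun p _ => hfT p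
  have hSne : S.Nonempty := .of_mul_right (hT ▸ univ_nonempty)
  refine ⟨a, ha, b, hb, hab, one_mem_inv_mul_self hSne, ?_, ?_⟩
  · rw [← hfg a, ← hfg b, hfab]
    exact inv_mul_mul_mem_inv_mul _ (hgS a) (hgS b)
  · rw [← hfg a, ← hfg b, hfab]
    exact inv_mul_mul_mem_inv_mul _ (hgS b) (hgS a)

theorem IsSyndetic.exists_card_eq_iSynd {G : Type*} [Group G] {S : Set G} (hS : IsSyndetic S) :
    ∃ T : Finset G, T.card = ISynd S ∧ (T : Set G) * S = Set.univ :=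
  Nat.sInf_mem (s := {n | ∃ T : Finset G, T.card = n ∧ (T : Set G) * S = Set.univ})
    (let ⟨T, hT⟩ := hS; ⟨T.card, T, rfl, hT⟩)

theorem stmt_3_general {G : Type*} [Group G] (S : Set G) (hS : IsSyndetic S) :
    IsVast (S⁻¹ * S) ∧ JVast (S⁻¹ * S) ≤ ISynd S + 1 := by
  obtain ⟨T, hTcard, hT⟩ := hS.exists_card_eq_iSynd
  have hphi : PhiCond (ISynd S + 1) (S⁻¹ * S) :=
    phiCond_inv_mul_of_mul_eq_univ hT (hTcard ▸ Nat.lt_succ_self _)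
  exact ⟨⟨_, Nat.succ_pos _, hphi⟩, Nat.sInf_le ⟨Nat.succ_pos _, hphi⟩⟩

theorem stmt_3 {G : Type*} [Group G] [Infinite G] (S : Set G) (hS : IsSyndetic S) :
    IsVast (S⁻¹ * S) ∧ JVast (S⁻¹ * S) ≤ ISynd S + 1 :=
  stmt_3_general S hS
end

section
/- Let G be a totally bounded topological group. Then every neighborhood U of the identity element of G is a vast subset of G. -/
open Pointwise

/-! Cover `G` by finitely many left translates `t • V` of a neighbourhood `V` of `1` with
`V⁻¹ V ⊆ U`. Among more elements than translates, two distinct ones `a = t v`, `b = t w` lie in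
the same translate by pigeonhole, and then `a⁻¹ b = v⁻¹ w` and `b⁻¹ a = w⁻¹ v` lie in `U`. -/

theorem phiCond_card_add_one_of_mul_eq_univ {G : Type*} [Group G] {M W : Set G} {T : Finset G}
    (hT : (T : Set G) * W = Set.univ) (hW : ∀ v ∈ W, ∀ w ∈ W, v⁻¹ * w ∈ M) :
    PhiCond (T.card + 1) M := by
  have hcover : ∀ g : G, ∃ t ∈ T, ∃ w ∈ W, t * w = g := fun g ↦ by
    obtain ⟨t, ht, w, hw, rfl⟩ : g ∈ (T : Set G) * W := hT ▸ Set.mem_univ g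
    exact ⟨t, ht, w, hw, rfl⟩
  choose center hcenter offset hoffset hmul using hcover
  intro P hP
  obtain ⟨a, ha, b, hb, hab, hsame⟩ :=
    Finset.exists_ne_map_eq_of_card_lt_of_maps_to (by omega : T.card < P.card)
      fun g _ ↦ hcenter g
  have hquot : ∀ x y, center x = center y → x⁻¹ * y = (offset x)⁻¹ * offset y := by
    intro x y hxy
    conv_lhs => rw [← hmul x, ← hmul y, hxy]
    group
  refine ⟨a, ha, b, hb, hab, ?_, ?_, ?_⟩
  · simpa using hW _ (hoffset a) _ (hoffset a)
  · exact hquot a b hsame ▸ hW _ (hoffset a) _ (hoffset b)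
  · exact hquot b a hsame.symm ▸ hW _ (hoffset b) _ (hoffset a)

theorem exists_nhds_one_inv_mul_mem {G : Type*} [Group G] [TopologicalSpace G]
    [IsTopologicalGroup G] {U : Set G} (hU : U ∈ nhds (1 : G)) :
    ∃ V ∈ nhds (1 : G), ∀ v ∈ V, ∀ w ∈ V, v⁻¹ * w ∈ U := by
  obtain ⟨V, hV, hVU⟩ := exists_nhds_split_inv hU
  refine ⟨V⁻¹, inv_mem_nhds_one G hV, fun v hv w hw ↦ ?_⟩
  simpa using hVU _ hv _ hw

theorem stmt_5_general {G : Type*} [Group G] [TopologicalSpace G]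
    [IsTopologicalGroup G]
    (htb : ∀ V ∈ nhds (1 : G), ∃ T : Finset G, (T : Set G) * V = Set.univ)
    (U : Set G) (hU : U ∈ nhds (1 : G)) :
    IsVast U := by
  obtain ⟨V, hV, hVU⟩ := exists_nhds_one_inv_mul_mem hU
  obtain ⟨T, hT⟩ := htb V hV
  exact ⟨T.card + 1, T.card.succ_pos, phiCond_card_add_one_of_mul_eq_univ hT hVU⟩

theorem stmt_5 {G : Type*} [Group G] [Infinite G] [TopologicalSpace G]
    [IsTopologicalGroup G]
    (htb : ∀ V ∈ nhds (1 : G), ∃ T : Finset G, (T : Set G) * V = Set.univ)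
    (U : Set G) (hU : U ∈ nhds (1 : G)) :
    IsVast U :=
  stmt_5_general htb U hU
end

section
/- Let G be a group and let W ⊆ G satisfy W ∩ W⁻¹W = ∅. Then G \ W is a vast subset of G and J_{G \ W} ≤ 4. -/
open Pointwise

/-!
Write `x → y` when `x⁻¹ * y ∈ W`. Since `y⁻¹ * z = (x⁻¹ * y)⁻¹ * (x⁻¹ * z)`, disjointness of `W`
and `W⁻¹ * W` forbids transitive triangles `x → y → z`, `x → z`, and also gives `1 ∉ W`.
A set of four elements violating `Φ₄` for `Wᶜ` would carry an arrow between any two of its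
elements, i.e. a tournament on four vertices, and every such tournament has a transitive triangle.
-/
theorem Finset.exists_transitive_triangle_of_four_le_card {α : Type*} {R : α → α → Prop}
    {s : Finset α} (hs : 4 ≤ s.card) (htot : ∀ a ∈ s, ∀ b ∈ s, a ≠ b → R a b ∨ R b a) :
    ∃ x ∈ s, ∃ y ∈ s, ∃ z ∈ s, R x y ∧ R y z ∧ R x z := by
  classical
  obtain ⟨a, ha⟩ := s.card_pos.mp (by omega)
  -- pigeonhole: two of the other three vertices lie on the same side of `a`
  obtain ⟨x, hx, y, hy, hxy, hside⟩ :=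
    Finset.exists_ne_map_eq_of_card_lt_of_maps_to (t := Finset.univ)
      (by rw [Finset.card_erase_of_mem ha, Finset.card_univ, Fintype.card_bool]; omega)
      (f := fun b => decide (R a b)) (fun _ _ => Finset.mem_coe.mpr (Finset.mem_univ _))
  rw [decide_eq_decide] at hside
  have hxs := Finset.mem_of_mem_erase hx
  have hys := Finset.mem_of_mem_erase hy
  have hax : a ≠ x := (Finset.ne_of_mem_erase hx).symm
  have hay : a ≠ y := (Finset.ne_of_mem_erase hy).symm
  wlog hRxy : R x y generalizing x y
  · exact this y hy x hx hxy.symm hside.symm hys hxs hay hax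
      ((htot x hxs y hys hxy).resolve_left hRxy)
  by_cases hRax : R a x
  · exact ⟨a, ha, x, hxs, y, hys, hRax, hRxy, hside.mp hRax⟩
  · have hRxa := (htot a ha x hxs hax).resolve_left hRax
    have hRya := (htot a ha y hys hay).resolve_left (hside.not.mp hRax)
    exact ⟨x, hxs, y, hys, a, ha, hRxy, hRya, hRxa⟩

section

variable {G : Type*} [Group G] {W : Set G}

theorem one_notMem_of_disjoint_inv_mul (hW : Disjoint W (W⁻¹ * W)) : (1 : G) ∉ W := fun h =>
  hW.notMem_of_mem_left h ⟨1, by simpa using h, 1, h, by simp⟩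

theorem not_transitive_triangle_of_disjoint_inv_mul (hW : Disjoint W (W⁻¹ * W)) {x y z : G}
    (hxy : x⁻¹ * y ∈ W) (hyz : y⁻¹ * z ∈ W) (hxz : x⁻¹ * z ∈ W) : False :=
  hW.notMem_of_mem_left hyz
    ⟨(x⁻¹ * y)⁻¹, Set.inv_mem_inv.mpr hxy, x⁻¹ * z, hxz, by group⟩

theorem phiCond_four_compl_of_disjoint_inv_mul (hW : Disjoint W (W⁻¹ * W)) :
    PhiCond 4 Wᶜ := by
  intro P hP
  by_contra! hPhi
  have htot : ∀ a ∈ P, ∀ b ∈ P, a ≠ b → a⁻¹ * b ∈ W ∨ b⁻¹ * a ∈ W := by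
    intro a ha b hb hab
    by_contra! hab'
    exact hPhi a ha b hb hab (one_notMem_of_disjoint_inv_mul hW) hab'.1 hab'.2
  obtain ⟨x, -, y, -, z, -, hxy, hyz, hxz⟩ :=
    Finset.exists_transitive_triangle_of_four_le_card hP.ge htot
  exact not_transitive_triangle_of_disjoint_inv_mul hW hxy hyz hxz

end

theorem stmt_6_general {G : Type*} [Group G] (W : Set G)
    (hW : W ∩ (W⁻¹ * W) = ∅) :
    IsVast Wᶜ ∧ JVast Wᶜ ≤ 4 := by
  have hPhi := phiCond_four_compl_of_disjoint_inv_mul (Set.disjoint_iff_inter_eq_empty.mpr hW)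
  exact ⟨⟨4, by norm_num, hPhi⟩, Nat.sInf_le ⟨by norm_num, hPhi⟩⟩

theorem stmt_6 {G : Type*} [Group G] [Infinite G] (W : Set G)
    (hW : W ∩ (W⁻¹ * W) = ∅) :
    IsVast Wᶜ ∧ JVast Wᶜ ≤ 4 :=
  stmt_6_general W hW
end

section
/- Suppose that G is a countably infinite group with identity e, X is a set, f : G → X is a finite-to-one surjection, 𝓕 is a free filter on G, and the image filter 𝓖 = {f(F) : F ∈ 𝓕} is a nonrapid free filter on X. Let (M_n)_{n∈ω} be a sequence of vast subsets of G. Then there exists a set ξ ⊆ G \ {e} such that: (i) ξ \ M_n is finite for each n ∈ ω; and (ii) each F ∈ 𝓕 contains elements g and h such that f(g) ≠ f(h) and g⁻¹h ∈ ξ. -/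
open Pointwise

/-- A filter is free if the intersection of all its members is empty. -/
def IsFreeFilter {X : Type*} (F : Filter X) : Prop := ⋂₀ F.sets = ∅

/-- A filter `𝓖` on `X` is nonrapid if, for every `f : ℕ → ℕ`, there is a sequence
`(T n)` of finite subsets of `X` such that every `F ∈ 𝓖` satisfies `|F ∩ T n| ≥ f n`
for some `n`. -/
def NonrapidFilter {X : Type*} (𝓖 : Filter X) : Prop :=
  ∀ f : ℕ → ℕ, ∃ T : ℕ → Finset X, ∀ F ∈ 𝓖, ∃ n : ℕ, f n ≤ (F ∩ (T n : Set X)).ncard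

/-!
Finite intersections of vast sets are vast (a two-colour Ramsey argument), so
`I n = M 0 ∩ ⋯ ∩ M n` satisfies `Φ_{m n}` for some `m n`. Nonrapidity applied to `m` gives finite
sets `T n ⊆ X`, and as `f` is finite-to-one the sets `S n = f⁻¹(T n)` are finite. Take
`ξ = ⋃ n, (I n \ {1}) ∩ (S n)⁻¹ * S n`: its `n`-th piece is finite and lies in `M k` once
`n ≥ k`, which gives (i). For `F ∈ 𝓕`, `f '' F` meets some `T n` in at least `m n` points, and
`Φ_{m n}` applied to one representative in `F` of each of these points gives (ii).
-/

open Finset in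
theorem Finset.exists_pairwise_insert_of_subset_filter {α : Type*} [DecidableEq α]
    {r : α → α → Prop} [Std.Symm r] {S T : Finset α} {v : α} [DecidablePred (r v)] (hv : v ∈ S)
    (hT : T ⊆ (S.erase v).filter (r v)) (hTr : (T : Set α).Pairwise r) :
    ∃ T' ⊆ S, #T' = #T + 1 ∧ (T' : Set α).Pairwise r := by
  have hTS : T ⊆ S.erase v := hT.trans (filter_subset _ _)
  have hvT : v ∉ T := fun h => by simpa using hTS h
  refine ⟨insert v T, insert_subset hv (hTS.trans (erase_subset _ _)), card_insert_of_notMem hvT, ?_⟩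
  rw [coe_insert, Set.pairwise_insert_of_symm_of_notMem (by simpa)]
  exact ⟨hTr, fun b hb => (mem_filter.1 (hT hb)).2⟩

open Finset in
theorem exists_ramsey_number {α : Type*} (r : α → α → Prop) [Std.Symm r] (m k : ℕ) :
    ∃ n, ∀ S : Finset α, n ≤ #S →
      (∃ T ⊆ S, #T = m ∧ (T : Set α).Pairwise r) ∨ (∃ T ⊆ S, #T = k ∧ (T : Set α).Pairwise rᶜ) := by
  classical
  induction m generalizing k with
  | zero => exact ⟨0, fun S _ => .inl ⟨∅, empty_subset _, rfl, by simp⟩⟩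
  | succ m ihm =>
    induction k with
    | zero => exact ⟨0, fun S _ => .inr ⟨∅, empty_subset _, rfl, by simp⟩⟩
    | succ k ihk =>
      obtain ⟨n₁, hn₁⟩ := ihm (k + 1)
      obtain ⟨n₂, hn₂⟩ := ihk
      refine ⟨n₁ + n₂ + 1, fun S hS => ?_⟩
      obtain ⟨v, hv⟩ : S.Nonempty := card_pos.1 (by omega)
      have hsplit : #((S.erase v).filter (r v)) + #((S.erase v).filter (rᶜ v)) + 1 = #S := by
        rw [← card_erase_add_one hv, ← card_filter_add_card_filter_not (s := S.erase v) (r v)]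
        congr
      obtain hA | hB : n₁ ≤ #((S.erase v).filter (r v)) ∨ n₂ ≤ #((S.erase v).filter (rᶜ v)) := by
        omega
      · rcases hn₁ _ hA with ⟨T, hTA, hT, hTr⟩ | ⟨T, hTA, hT, hTr⟩
        · exact .inl (hT ▸ exists_pairwise_insert_of_subset_filter hv hTA hTr)
        · exact .inr ⟨T, hTA.trans ((filter_subset _ _).trans (erase_subset _ _)), hT, hTr⟩
      · rcases hn₂ _ hB with ⟨T, hTB, hT, hTr⟩ | ⟨T, hTB, hT, hTr⟩
        · exact .inl ⟨T, hTB.trans ((filter_subset _ _).trans (erase_subset _ _)), hT, hTr⟩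
        · exact .inr (hT ▸ exists_pairwise_insert_of_subset_filter hv hTB hTr)

section Vast

variable {G : Type*} [Group G] {m : ℕ} {M N : Set G}

theorem PhiCond.mono (h : PhiCond m M) {n : ℕ} (hmn : m ≤ n) : PhiCond n M := by
  intro P hP
  obtain ⟨Q, hQP, hQ⟩ := Finset.exists_subset_card_eq (hP ▸ hmn)
  obtain ⟨a, ha, b, hb, hab⟩ := h Q hQ
  exact ⟨a, hQP ha, b, hQP hb, hab⟩

theorem isVast_univ : IsVast (Set.univ : Set G) := by
  refine ⟨2, two_pos, fun P hP => ?_⟩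
  obtain ⟨a, ha, b, hb, hab⟩ := Finset.one_lt_card.1 (hP ▸ one_lt_two)
  exact ⟨a, ha, b, hb, hab, trivial, trivial, trivial⟩

theorem IsVast.inter (hM : IsVast M) (hN : IsVast N) : IsVast (M ∩ N) := by
  obtain ⟨m, -, hm⟩ := hM
  obtain ⟨k, -, hk⟩ := hN
  replace hm := hm.mono (le_max_left m k)
  replace hk := hk.mono (le_max_right m k)
  let r : G → G → Prop := fun a b => a⁻¹ * b ∈ M ∧ b⁻¹ * a ∈ M
  have : Std.Symm r := ⟨fun _ _ h => h.symm⟩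
  obtain ⟨n, hn⟩ := exists_ramsey_number r (max m k) (max m k)
  refine ⟨n + 1, n.succ_pos, fun P hP => ?_⟩
  rcases hn P (by omega) with ⟨T, hTP, hT, hTr⟩ | ⟨T, hTP, hT, hTr⟩
  · obtain ⟨-, -, -, -, -, h1M, -⟩ := hm T hT
    obtain ⟨a, ha, b, hb, hab, h1N, habN, hbaN⟩ := hk T hT
    obtain ⟨habM, hbaM⟩ := hTr ha hb hab
    exact ⟨a, hTP ha, b, hTP hb, hab, ⟨h1M, h1N⟩, ⟨habM, habN⟩, ⟨hbaM, hbaN⟩⟩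
  · obtain ⟨a, ha, b, hb, hab, -, hr⟩ := hm T hT
    exact (hTr ha hb hab hr).elim

theorem isVast_biInter {ι : Type*} [DecidableEq ι] {M : ι → Set G} (s : Finset ι)
    (h : ∀ i ∈ s, IsVast (M i)) : IsVast (⋂ i ∈ s, M i) := by
  induction s using Finset.induction_on with
  | empty => simpa using isVast_univ
  | insert i s _ ih =>
    rw [Finset.set_biInter_insert]
    exact (h i (s.mem_insert_self i)).inter (ih fun j hj => h j (Finset.mem_insert_of_mem hj))

theorem PhiCond.exists_of_le_ncard_image {X : Type*} (hM : PhiCond m M) {f : G → X} {F : Set G}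
    {T : Finset X} (hm : m ≤ (f '' F ∩ T).ncard) :
    ∃ g ∈ F, ∃ h ∈ F, f g ≠ f h ∧ f g ∈ T ∧ f h ∈ T ∧ g⁻¹ * h ∈ M := by
  classical
  obtain ⟨U, hUF, hinj, hUT⟩ := Finset.exists_subset_injOn_image_eq_of_surjOn F
    (T.filter (· ∈ f '' F)) fun x hx => by simpa using (Finset.mem_filter.1 hx).2
  have hcard : (f '' F ∩ T).ncard = U.card := by
    rw [← Finset.card_image_of_injOn hinj, hUT, ← Set.ncard_coe_finset]
    congr 1; ext; simp [and_comm]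
  obtain ⟨P, hPU, hP⟩ := Finset.exists_subset_card_eq (hcard ▸ hm)
  obtain ⟨a, ha, b, hb, hab, -, habM, -⟩ := hM P hP
  have hfT : ∀ x ∈ U, f x ∈ T := fun x hx =>
    (Finset.mem_filter.1 (hUT ▸ Finset.mem_image_of_mem f hx)).1
  exact ⟨a, hUF (hPU ha), b, hUF (hPU hb), fun h => hab (hinj (hPU ha) (hPU hb) h),
    hfT a (hPU ha), hfT b (hPU hb), habM⟩

end Vast

theorem Set.Finite.iUnion_diff_of_forall_ge_subset {α : Type*} {D : ℕ → Set α} {N : Set α}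
    (hD : ∀ n, (D n).Finite) {k : ℕ} (hk : ∀ n, k ≤ n → D n ⊆ N) : ((⋃ n, D n) \ N).Finite := by
  refine ((Set.finite_Iio k).biUnion fun n _ => hD n).subset ?_
  rintro x ⟨hx, hxN⟩
  obtain ⟨n, hn⟩ := Set.mem_iUnion.1 hx
  exact Set.mem_biUnion (Set.mem_Iio.2 (not_le.1 fun h => hxN (hk n h hn))) hn

theorem stmt_8_general {G X : Type*} [Group G]
    (f : G → X) (hfin : ∀ x : X, (f ⁻¹' {x}).Finite)
    (𝓕 : Filter G)
    (hGnr : NonrapidFilter (𝓕.map f))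
    (M : ℕ → Set G) (hM : ∀ n, IsVast (M n)) :
    ∃ ξ : Set G, ξ ⊆ {(1 : G)}ᶜ ∧
      (∀ n, (ξ \ M n).Finite) ∧
      (∀ F ∈ 𝓕, ∃ g ∈ F, ∃ h ∈ F, f g ≠ f h ∧ g⁻¹ * h ∈ ξ) := by
  let I n := ⋂ k ∈ Finset.Iic n, M k
  choose m hm using fun n => (isVast_biInter (Finset.Iic n) fun k _ => hM k).imp fun _ h => h.2
  obtain ⟨T, hT⟩ := hGnr m
  let S n := f ⁻¹' (T n : Set X)
  have hS : ∀ n, (S n).Finite := fun n => (T n).finite_toSet.preimage' fun x _ => hfin x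
  refine ⟨⋃ n, (I n \ {1}) ∩ ((S n)⁻¹ * S n), ?_, fun k => ?_, fun F hF => ?_⟩
  · exact Set.iUnion_subset fun n => Set.inter_subset_left.trans (Set.sdiff_subset_compl _ _)
  · refine Set.Finite.iUnion_diff_of_forall_ge_subset
      (k := k) (fun n => ((hS n).inv.mul (hS n)).subset Set.inter_subset_right) fun n hn => ?_
    exact Set.inter_subset_left.trans (Set.sdiff_subset.trans
      (Set.biInter_subset_of_mem (Finset.mem_Iic.2 hn)))
  · obtain ⟨n, hn⟩ := hT _ (Filter.image_mem_map hF)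
    obtain ⟨g, hg, h, hh, hne, hgT, hhT, hgh⟩ := (hm n).exists_of_le_ncard_image hn
    have hgh1 : g⁻¹ * h ≠ 1 := fun h1 => hne (by rw [inv_mul_eq_one.1 h1])
    exact ⟨g, hg, h, hh, hne, Set.mem_iUnion.2 ⟨n, ⟨hgh, hgh1⟩,
      Set.mem_mul.2 ⟨g⁻¹, by simpa [S] using hgT, h, hhT, rfl⟩⟩⟩

theorem stmt_8 {G X : Type*} [Group G] [Countable G] [Infinite G]
    (f : G → X) (hfin : ∀ x : X, (f ⁻¹' {x}).Finite) (hsurj : Function.Surjective f)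
    (𝓕 : Filter G) (hfree : IsFreeFilter 𝓕)
    (hGfree : IsFreeFilter (𝓕.map f)) (hGnr : NonrapidFilter (𝓕.map f))
    (M : ℕ → Set G) (hM : ∀ n, IsVast (M n)) :
    ∃ ξ : Set G, ξ ⊆ {(1 : G)}ᶜ ∧
      (∀ n, (ξ \ M n).Finite) ∧
      (∀ F ∈ 𝓕, ∃ g ∈ F, ∃ h ∈ F, f g ≠ f h ∧ g⁻¹ * h ∈ ξ) :=
  stmt_8_general f hfin 𝓕 hGnr M hM
end

section
/- Let G be a countably infinite Hausdorff topological group with identity e. Suppose that X is a set, f : G → X is a finite-to-one surjection, 𝓕 is a free filter on G converging to e, and the image filter 𝓖 = {f(F) : F ∈ 𝓕} is a nonrapid free filter on X. Suppose also that (U_n)_{n∈ω} is a decreasing sequence of neighborhoods of e such that U_n = U_n⁻¹, U_{n+1}³ ⊆ U_n, and ⋂_n U_n = {e}. Finally, let (H_n)_{n∈ω} be a sequence of subgroups of finite index in G. Then there exists a set ξ ⊆ G \ {e} such that: (i) ξ is discrete and e is its only limit point; (ii) each F ∈ 𝓕 contains g and h with f(g) ≠ f(h) and g⁻¹h ∈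 ξ; (iii) ξ ∩ gU_{n+1} is finite for any n ∈ ω and any g ∈ G \ U_n; (iv) ξ \ H_n is finite for each n ∈ ω. If, in addition, U_n is syndetic for each n ∈ ω, then (v) ξ \ U_n is finite for each n ∈ ω. -/
open Pointwise

/-- A subset `D` of a topological space is discrete if every point of `D` has a
neighborhood meeting `D` only in that point. -/
def IsDiscreteSubset {X : Type*} [TopologicalSpace X] (D : Set X) : Prop :=
  ∀ x ∈ D, ∃ U ∈ nhds x, U ∩ D = {x}

/-- `x` is a limit point of `D` if every neighborhood of `x` meets `D \ {x}`. -/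
def IsLimitPoint {X : Type*} [TopologicalSpace X] (x : X) (D : Set X) : Prop :=
  ∀ U ∈ nhds x, ((D \ {x}) ∩ U).Nonempty

/-!
The set `ξ` is the union of finite sets `Ξ n`: the quotients `a⁻¹ * b`, with `f a ≠ f b`, of
points of the finite set `f ⁻¹' T n` given by nonrapidity, that lie in `H 0 ⊓ ⋯ ⊓ H (n - 1)`
and outside the first `n` sets of an enumeration of the balls `g • U (m + 1)`, `g ∉ U m`.
Such a ball is product-free, since `z z' ∈ g U_{m+1}` for `z, z' ∈ g U_{m+1}` forces
`g ∈ U_{m+1}³ ⊆ U_m`. A Ramsey-type pigeonhole shows that among `ramseyBound n` points of one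
coset of a finite-index subgroup, two have a quotient avoiding `n` given product-free sets.
Applying nonrapidity of `f 𝓕` to `n ↦ index (H 0 ⊓ ⋯ ⊓ H (n - 1)) * ramseyBound n`, every
`F ∈ 𝓕` therefore contributes a pair to some `Ξ n`. Each ball and each complement `(H n)ᶜ`
meets only finitely many `Ξ n`, which gives (iii)–(v); discreteness and (i) follow from (iii),
as a point `x ≠ 1` has the neighbourhood `x • U (m + 1)` for any `m` with `x ∉ U m`.
-/

open Filter Topology

section ProductFree

variable {G : Type*} [Group G]

def IsProductFree (C : Set G) : Prop := ∀ a ∈ C, ∀ b ∈ C, a * b ∉ C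

lemma isProductFree_empty : IsProductFree (∅ : Set G) := by
  simp [IsProductFree]

lemma isProductFree_smul {V W : Set G} (hV : V⁻¹ = V) (hVW : V * V * V ⊆ W) {g : G}
    (hg : g ∉ W) : IsProductFree (g • V) := by
  rintro _ ⟨u, hu, rfl⟩ _ ⟨v, hv, rfl⟩ ⟨w, hw, hgw⟩
  simp only [smul_eq_mul] at hgw
  have hw' : w = u * g * v := mul_left_cancel (a := g) (by rw [hgw]; group)
  have hinv : ∀ x ∈ V, x⁻¹ ∈ V := fun x hx => hV ▸ Set.inv_mem_inv.mpr hx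
  apply hg (hVW _)
  rw [show g = u⁻¹ * w * v⁻¹ by rw [hw']; group]
  exact Set.mul_mem_mul (Set.mul_mem_mul (hinv u hu) hw) (hinv v hv)

def ramseyBound : ℕ → ℕ
  | 0 => 2
  | c + 1 => (c + 1) * ramseyBound c + 1

lemma ramseyBound_pos (c : ℕ) : 0 < ramseyBound c := by
  cases c <;> simp [ramseyBound]

theorem exists_ne_inv_mul_notMem {C : ℕ → Set G} {J : Finset ℕ}
    (hC : ∀ j ∈ J, IsProductFree (C j)) {P : Finset G} (hP : ramseyBound J.card ≤ P.card) :
    ∃ a ∈ P, ∃ b ∈ P, a ≠ b ∧ ∀ j ∈ J, a⁻¹ * b ∉ C j := by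
  classical
  induction hc : J.card generalizing J P with
  | zero =>
    rw [hc] at hP
    obtain ⟨a, ha, b, hb, hab⟩ := Finset.one_lt_card.mp
      (show 1 < P.card by simp only [ramseyBound] at hP; omega)
    exact ⟨a, ha, b, hb, hab, by simp [Finset.card_eq_zero.mp hc]⟩
  | succ c ih =>
    rw [hc] at hP
    obtain ⟨a₀, ha₀⟩ : P.Nonempty := Finset.card_pos.mp ((ramseyBound_pos _).trans_le hP)
    by_cases hgood : ∃ b ∈ P.erase a₀, ∀ j ∈ J, a₀⁻¹ * b ∉ C j
    · obtain ⟨b, hb, hbJ⟩ := hgood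
      exact ⟨a₀, ha₀, b, Finset.mem_of_mem_erase hb, (Finset.ne_of_mem_erase hb).symm, hbJ⟩
    push Not at hgood
    let Q : ℕ → Finset G := fun j => (P.erase a₀).filter (a₀⁻¹ * · ∈ C j)
    obtain ⟨j₀, hj₀, hQ⟩ : ∃ j₀ ∈ J, ramseyBound c ≤ (Q j₀).card := by
      refine Finset.exists_le_of_sum_le (Finset.card_pos.mp (by omega)) ?_
      calc ∑ _j ∈ J, ramseyBound c ≤ (P.erase a₀).card := by
            rw [Finset.sum_const, smul_eq_mul, hc, Finset.card_erase_of_mem ha₀]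
            simp only [ramseyBound] at hP
            omega
        _ ≤ (J.biUnion Q).card := Finset.card_le_card fun b hb => by
            obtain ⟨j, hj, hbj⟩ := hgood b hb
            exact Finset.mem_biUnion.mpr ⟨j, hj, Finset.mem_filter.mpr ⟨hb, hbj⟩⟩
        _ ≤ ∑ j ∈ J, (Q j).card := Finset.card_biUnion_le
    have hcard : (J.erase j₀).card = c := by rw [Finset.card_erase_of_mem hj₀, hc]; rfl
    obtain ⟨a, ha, b, hb, hab, hJ⟩ := ih (J := J.erase j₀)
      (fun j hj => hC j (Finset.mem_of_mem_erase hj)) (hcard ▸ hQ) hcard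
    rw [Finset.mem_filter] at ha hb
    refine ⟨a, Finset.mem_of_mem_erase ha.1, b, Finset.mem_of_mem_erase hb.1, hab,
      fun j hj hjab => ?_⟩
    obtain rfl | hj₀j := eq_or_ne j₀ j
    · -- `(a₀⁻¹ * a) * (a⁻¹ * b) = a₀⁻¹ * b`, and all three lie in `C j₀` otherwise
      exact hC j₀ hj₀ _ ha.2 _ hjab (by simpa [mul_assoc] using hb.2)
    · exact hJ j (Finset.mem_erase.mpr ⟨hj₀j.symm, hj⟩) hjab

theorem Subgroup.exists_ne_inv_mul_mem_notMem (K : Subgroup G) [K.FiniteIndex] {C : ℕ → Set G}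
    {J : Finset ℕ} (hC : ∀ j ∈ J, IsProductFree (C j)) {P : Finset G}
    (hP : K.index * ramseyBound J.card ≤ P.card) :
    ∃ a ∈ P, ∃ b ∈ P, a ≠ b ∧ a⁻¹ * b ∈ K ∧ ∀ j ∈ J, a⁻¹ * b ∉ C j := by
  classical
  have := Fintype.ofFinite (G ⧸ K)
  obtain ⟨q, -, hq⟩ := Finset.exists_le_card_fiber_of_mul_le_card_of_maps_to
    (f := (QuotientGroup.mk : G → G ⧸ K)) (fun _ _ => Finset.mem_univ _) Finset.univ_nonempty
    (by rwa [Finset.card_univ, Fintype.card_eq_nat_card, ← Subgroup.index_eq_card])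
  obtain ⟨a, ha, b, hb, hab, hJ⟩ := exists_ne_inv_mul_notMem hC hq
  rw [Finset.mem_filter] at ha hb
  exact ⟨a, ha.1, b, hb.1, hab, QuotientGroup.eq.mp (ha.2.trans hb.2.symm), hJ⟩

theorem Subgroup.exists_inv_mul_mem_of_index_mul_le_ncard {X : Type*} {f : G → X} {F : Set G}
    {Y : Set X} (K : Subgroup G) [K.FiniteIndex] {C : ℕ → Set G} {J : Finset ℕ}
    (hC : ∀ j ∈ J, IsProductFree (C j)) (hY : K.index * ramseyBound J.card ≤ (f '' F ∩ Y).ncard) :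
    ∃ a ∈ F ∩ f ⁻¹' Y, ∃ b ∈ F ∩ f ⁻¹' Y, f a ≠ f b ∧ a⁻¹ * b ∈ K ∧ ∀ j ∈ J, a⁻¹ * b ∉ C j := by
  obtain ⟨s, hsF, hs⟩ := Set.exists_subset_bijOn (F ∩ f ⁻¹' Y) f
  rw [Set.image_inter_preimage] at hs
  have hfin : (f '' F ∩ Y).Finite := Set.finite_of_ncard_pos <| (Nat.mul_pos
    (Nat.pos_of_ne_zero Subgroup.FiniteIndex.index_ne_zero) (ramseyBound_pos _)).trans_le hY
  have hsfin : s.Finite := Set.Finite.of_finite_image (hs.image_eq ▸ hfin) hs.injOn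
  obtain ⟨a, ha, b, hb, hab, hK, hJ⟩ := K.exists_ne_inv_mul_mem_notMem hC (P := hsfin.toFinset)
    (by rwa [← Set.ncard_eq_toFinset_card _ hsfin, ← hs.injOn.ncard_image, hs.image_eq])
  rw [Set.Finite.mem_toFinset] at ha hb
  exact ⟨a, hsF ha, b, hsF hb, hs.injOn.ne ha hb hab, hK, hJ⟩

end ProductFree

theorem finite_iUnion_inter_of_disjoint {α : Type*} {s : ℕ → Set α} (hs : ∀ n, (s n).Finite)
    {t : Set α} {N : ℕ} (ht : ∀ n, N ≤ n → Disjoint (s n) t) : ((⋃ n, s n) ∩ t).Finite := by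
  refine ((Set.finite_lt_nat N).biUnion fun n _ => hs n).subset ?_
  rintro x ⟨hx, hxt⟩
  obtain ⟨n, hn⟩ := Set.mem_iUnion.mp hx
  exact Set.mem_biUnion (not_le.mp fun h => Set.disjoint_left.mp (ht n h) hn hxt) hn

theorem exists_inv_mul_set_of_nonrapidFilter {G X : Type*} [Group G] (f : G → X)
    (hfin : ∀ x : X, (f ⁻¹' {x}).Finite) (𝓕 : Filter G) (hnr : NonrapidFilter (𝓕.map f))
    {C : ℕ → Set G} (hC : ∀ j, IsProductFree (C j)) (H : ℕ → Subgroup G)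
    (hH : ∀ n, (H n).FiniteIndex) :
    ∃ ξ : Set G, ξ ⊆ {1}ᶜ ∧ (∀ F ∈ 𝓕, ∃ g ∈ F, ∃ h ∈ F, f g ≠ f h ∧ g⁻¹ * h ∈ ξ) ∧
      (∀ j, (ξ ∩ C j).Finite) ∧ ∀ n, (ξ \ (H n : Set G)).Finite := by
  let K : ℕ → Subgroup G := fun n => ⨅ i : Fin n, H i
  have hK n : (K n).FiniteIndex := Subgroup.finiteIndex_iInf fun i => hH i
  obtain ⟨T, hT⟩ := hnr fun n => (K n).index * ramseyBound n
  let Ξ : ℕ → Set G := fun n => {x | x ∈ K n ∧ (∀ j < n, x ∉ C j) ∧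
    ∃ a ∈ f ⁻¹' T n, ∃ b ∈ f ⁻¹' T n, f a ≠ f b ∧ a⁻¹ * b = x}
  have hΞ n : (Ξ n).Finite := by
    have hS : (f ⁻¹' (T n : Set X)).Finite := (T n).finite_toSet.preimage' fun x _ => hfin x
    refine ((hS.prod hS).image fun p => p.1⁻¹ * p.2).subset ?_
    rintro _ ⟨-, -, a, ha, b, hb, -, rfl⟩
    exact ⟨(a, b), ⟨ha, hb⟩, rfl⟩
  refine ⟨⋃ n, Ξ n, ?_, fun F hF => ?_, fun j => ?_, fun i => ?_⟩
  · intro x hx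
    obtain ⟨n, -, -, a, -, b, -, hab, rfl⟩ := Set.mem_iUnion.mp hx
    simpa [inv_mul_eq_one] using ne_of_apply_ne f hab
  · obtain ⟨n, hn⟩ := hT _ (Filter.image_mem_map hF)
    obtain ⟨a, ⟨haF, haT⟩, b, ⟨hbF, hbT⟩, hab, hK, hC⟩ :=
      (K n).exists_inv_mul_mem_of_index_mul_le_ncard (J := Finset.range n) (fun j _ => hC j)
        (by rwa [Finset.card_range])
    exact ⟨a, haF, b, hbF, hab, Set.mem_iUnion.mpr
      ⟨n, hK, fun j hj => hC j (Finset.mem_range.mpr hj), a, haT, b, hbT, hab, rfl⟩⟩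
  · exact finite_iUnion_inter_of_disjoint hΞ (N := j + 1) fun n hn =>
      Set.disjoint_left.mpr fun x hx => hx.2.1 j hn
  · exact finite_iUnion_inter_of_disjoint hΞ (N := i + 1) fun n hn =>
      Set.disjoint_left.mpr fun x hx hxH => hxH (iInf_le (fun k : Fin n => H k) ⟨i, hn⟩ hx.1)

section Topology

variable {Y : Type*} [TopologicalSpace Y] [T1Space Y]

theorem exists_mem_nhds_inter_subset_singleton {D N : Set Y} {x : Y} (hN : N ∈ 𝓝 x)
    (hfin : (N ∩ D).Finite) : ∃ W ∈ 𝓝 x, W ∩ D ⊆ {x} :=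
  ⟨N \ ((N ∩ D) \ {x}), sdiff_mem hN (hfin.sdiff.isClosed.compl_mem_nhds fun h => h.2 rfl),
    fun _ ⟨⟨hyN, hy⟩, hyD⟩ => by_contra fun hyx => hy ⟨⟨hyN, hyD⟩, hyx⟩⟩

theorem isDiscreteSubset_and_eq_of_isLimitPoint {D : Set Y} {e : Y} (he : e ∉ D)
    (hloc : ∀ x ≠ e, ∃ N ∈ 𝓝 x, (N ∩ D).Finite) :
    IsDiscreteSubset D ∧ ∀ x, IsLimitPoint x D → x = e := by
  have hW x (hx : x ≠ e) : ∃ W ∈ 𝓝 x, W ∩ D ⊆ {x} :=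
    let ⟨_, hN, hfin⟩ := hloc x hx
    exists_mem_nhds_inter_subset_singleton hN hfin
  refine ⟨fun x hx => ?_, fun x hx => by_contra fun hxe => ?_⟩
  · obtain ⟨W, hW, hWD⟩ := hW x (ne_of_mem_of_not_mem hx he)
    exact ⟨W, hW, hWD.antisymm (Set.singleton_subset_iff.mpr ⟨mem_of_mem_nhds hW, hx⟩)⟩
  · obtain ⟨W, hW, hWD⟩ := hW x hxe
    obtain ⟨y, ⟨hyD, hyx⟩, hyW⟩ := hx W hW
    exact hyx (hWD ⟨hyW, hyD⟩)

end Topology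

section TopologicalGroup

variable {G : Type*} [Group G] [TopologicalSpace G] [IsTopologicalGroup G]

theorem isLimitPoint_one_of_forall_mem {𝓕 : Filter G} (hconv : 𝓕 ≤ 𝓝 1) {ξ : Set G}
    (h1 : ξ ⊆ {1}ᶜ) (hξ : ∀ F ∈ 𝓕, ∃ g ∈ F, ∃ h ∈ F, g⁻¹ * h ∈ ξ) : IsLimitPoint 1 ξ := by
  intro W hW
  have hlim : Tendsto (fun p : G × G => p.1⁻¹ * p.2) (𝓕 ×ˢ 𝓕) (𝓝 1) := by
    simpa using ((tendsto_fst.mono_right hconv).inv).mul (tendsto_snd.mono_right hconv)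
  obtain ⟨F, hF, hFW⟩ := eventually_prod_self_iff'.mp (hlim.eventually_mem hW)
  obtain ⟨g, hg, h, hh, hgh⟩ := hξ F hF
  exact ⟨g⁻¹ * h, ⟨hgh, h1 hgh⟩, hFW g hg h hh⟩

end TopologicalGroup

theorem finite_diff_of_isSyndetic {G : Type*} [Group G] {ξ A V W : Set G} (hA : IsSyndetic A)
    (hVA : V * A ⊆ W) (hfin : ∀ g ∉ V, (ξ ∩ g • A).Finite) : (ξ \ W).Finite := by
  obtain ⟨T, hT⟩ := hA
  refine ((T.finite_toSet.inter_of_left {g | g ∉ V}).biUnion fun g hg => hfin g hg.2).subset ?_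
  rintro x ⟨hxξ, hxW⟩
  obtain ⟨t, ht, a, ha, rfl⟩ : x ∈ (T : Set G) * A := hT ▸ Set.mem_univ x
  exact Set.mem_biUnion ⟨ht, fun htV => hxW (hVA (Set.mul_mem_mul htV ha))⟩
    ⟨hxξ, Set.smul_mem_smul_set ha⟩

theorem exists_seq_isProductFree_smul {G : Type*} [Group G] [Countable G] {U : ℕ → Set G}
    (hUsymm : ∀ n, (U n)⁻¹ = U n) (hUcube : ∀ n, U (n + 1) * U (n + 1) * U (n + 1) ⊆ U n) :
    ∃ C : ℕ → Set G, (∀ j, IsProductFree (C j)) ∧ ∀ n, ∀ g ∉ U n, ∃ j, C j = g • U (n + 1) := by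
  classical
  obtain ⟨σ, hσ⟩ := exists_surjective_nat (ℕ × G)
  refine ⟨fun j => if (σ j).2 ∈ U (σ j).1 then ∅ else (σ j).2 • U ((σ j).1 + 1),
    fun j => ?_, fun n g hg => ?_⟩
  · dsimp only
    split_ifs with h
    · exact isProductFree_empty
    · exact isProductFree_smul (hUsymm _) (hUcube _) h
  · obtain ⟨j, hj⟩ := hσ (n, g)
    exact ⟨j, by simp [hj, hg]⟩

theorem stmt_9_general {G X : Type*} [Group G] [Countable G]
    [TopologicalSpace G] [IsTopologicalGroup G] [T2Space G]
    (f : G → X) (hfin : ∀ x : X, (f ⁻¹' {x}).Finite)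
    (𝓕 : Filter G) (hconv : 𝓕 ≤ nhds 1)
    (hGnr : NonrapidFilter (𝓕.map f))
    (U : ℕ → Set G) (hUnhds : ∀ n, U n ∈ nhds (1 : G))
    (hUdec : ∀ n, U (n + 1) ⊆ U n) (hUsymm : ∀ n, (U n)⁻¹ = U n)
    (hUcube : ∀ n, U (n + 1) * U (n + 1) * U (n + 1) ⊆ U n)
    (hUinter : ⋂ n, U n = {(1 : G)})
    (H : ℕ → Subgroup G) (hH : ∀ n, (H n).FiniteIndex) :
    ∃ ξ : Set G, ξ ⊆ {(1 : G)}ᶜ ∧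
      (IsDiscreteSubset ξ ∧ IsLimitPoint 1 ξ ∧ ∀ x, IsLimitPoint x ξ → x = 1) ∧
      (∀ F ∈ 𝓕, ∃ g ∈ F, ∃ h ∈ F, f g ≠ f h ∧ g⁻¹ * h ∈ ξ) ∧
      (∀ n : ℕ, ∀ g ∉ U n, (ξ ∩ g • U (n + 1)).Finite) ∧
      (∀ n, (ξ \ (H n : Set G)).Finite) ∧
      ((∀ n, IsSyndetic (U n)) → ∀ n, (ξ \ U n).Finite) := by
  obtain ⟨C, hCfree, hCball⟩ := exists_seq_isProductFree_smul hUsymm hUcube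
  obtain ⟨ξ, hξ1, hξF, hξC, hξH⟩ := exists_inv_mul_set_of_nonrapidFilter f hfin 𝓕 hGnr hCfree H hH
  have hball n g (hg : g ∉ U n) : (ξ ∩ g • U (n + 1)).Finite := by
    obtain ⟨j, hj⟩ := hCball n g hg
    exact hj ▸ hξC j
  have hloc x (hx : x ≠ (1 : G)) : ∃ N ∈ 𝓝 x, (N ∩ ξ).Finite := by
    obtain ⟨n, hxn⟩ : ∃ n, x ∉ U n := by
      simpa using (show x ∉ ⋂ n, U n by rwa [hUinter])
    exact ⟨x • U (n + 1), smul_mem_nhds_self.mpr (hUnhds _), Set.inter_comm ξ _ ▸ hball n x hxn⟩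
  have hmul n : U (n + 1) * U (n + 2) ⊆ U n :=
    (Set.mul_subset_mul_left (hUdec _)).trans <|
      (Set.subset_mul_left _ (mem_of_mem_nhds (hUnhds _))).trans (hUcube n)
  obtain ⟨hdisc, hlim⟩ := isDiscreteSubset_and_eq_of_isLimitPoint (fun h => hξ1 h rfl) hloc
  refine ⟨ξ, hξ1, ⟨hdisc, ?_, hlim⟩, hξF, hball, hξH,
    fun hsyn n => finite_diff_of_isSyndetic (hsyn (n + 2)) (hmul n) (hball (n + 1))⟩
  exact isLimitPoint_one_of_forall_mem hconv hξ1 fun F hF =>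
    let ⟨g, hg, h, hh, _, hgh⟩ := hξF F hF
    ⟨g, hg, h, hh, hgh⟩

theorem stmt_9 {G X : Type*} [Group G] [Countable G] [Infinite G]
    [TopologicalSpace G] [IsTopologicalGroup G] [T2Space G]
    (f : G → X) (hfin : ∀ x : X, (f ⁻¹' {x}).Finite) (hsurj : Function.Surjective f)
    (𝓕 : Filter G) (hfree : IsFreeFilter 𝓕) (hconv : 𝓕 ≤ nhds 1)
    (hGfree : IsFreeFilter (𝓕.map f)) (hGnr : NonrapidFilter (𝓕.map f))
    (U : ℕ → Set G) (hUnhds : ∀ n, U n ∈ nhds (1 : G))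
    (hUdec : ∀ n, U (n + 1) ⊆ U n) (hUsymm : ∀ n, (U n)⁻¹ = U n)
    (hUcube : ∀ n, U (n + 1) * U (n + 1) * U (n + 1) ⊆ U n)
    (hUinter : ⋂ n, U n = {(1 : G)})
    (H : ℕ → Subgroup G) (hH : ∀ n, (H n).FiniteIndex) :
    ∃ ξ : Set G, ξ ⊆ {(1 : G)}ᶜ ∧
      (IsDiscreteSubset ξ ∧ IsLimitPoint 1 ξ ∧ ∀ x, IsLimitPoint x ξ → x = 1) ∧
      (∀ F ∈ 𝓕, ∃ g ∈ F, ∃ h ∈ F, f g ≠ f h ∧ g⁻¹ * h ∈ ξ) ∧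
      (∀ n : ℕ, ∀ g ∉ U n, (ξ ∩ g • U (n + 1)).Finite) ∧
      (∀ n, (ξ \ (H n : Set G)).Finite) ∧
      ((∀ n, IsSyndetic (U n)) → ∀ n, (ξ \ U n).Finite) :=
  stmt_9_general f hfin 𝓕 hconv hGnr U hUnhds hUdec hUsymm hUcube hUinter H hH
end

section
/- Assume that there are no rapid ultrafilters on ω. Let G be a countably infinite Hausdorff topological group with identity e, let Y ⊆ G satisfy e ∈ cl(Y) \ Y, and let {Y_n : n ∈ ω} be a partition of Y into finite subsets. Then there exists a set ξ ⊆ G \ {e} such that: (i) ξ is discrete and e is its only limit point; and (ii) ξ ⊆ ⋃_{i≠j} Y_i⁻¹ Y_j. -/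
open Pointwise

/-- An ultrafilter `𝓤` on `ℕ` is rapid if it is free and every function `ℕ → ℕ` is
majorized by the increasing enumeration of some member of `𝓤`; the latter holds for a
member `F` iff for each `n` the set `F` has at most `n` elements below `f n`. -/
def IsRapidUltrafilter (𝓤 : Ultrafilter ℕ) : Prop :=
  IsFreeFilter (𝓤 : Filter ℕ) ∧
  ∀ f : ℕ → ℕ, ∃ F ∈ 𝓤, ∀ n : ℕ, (F ∩ Set.Iio (f n)).ncard ≤ n

/-!
Enumerate `G \ {1}` as `(z t)` and choose recursively closed sets `K t` with `z t ∈ interior (K t)`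
such that `(K t)⁻¹ * K t` misses `K s` for `s ≤ t`. The trace of `𝓝 1` on `Y`, pushed forward to
the block indices, is a free filter on `ℕ`; any ultrafilter refining it is not rapid, hence it is
nonrapid, and for `f n = (n + 2) ^ (n + 2) + 1` it yields finite sets `T n`. Let `ξ` be the union
over `n` of the quotients `y⁻¹ * y'` of points from distinct blocks indexed in `T n`, with
`K 0 ∪ ⋯ ∪ K n` removed. Near `z t` only the finitely many points from the stages `n < t` survive,
so `ξ` is discrete and can only accumulate at `1`. Given a neighbourhood `U` of `1`, more than
`(n + 2) ^ (n + 2)` blocks indexed in `T n` meet `U`; if all quotients of chosen representatives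
fell into `K 0 ∪ ⋯ ∪ K n`, colour each pair by such a `t`: two pairs `(a, b)`, `(a, c)` of colour
`t` force `(b, c)` to have a colour `> t`, and such colourings have boundedly many points.
-/

open Filter Topology

namespace Finset

theorem card_le_of_increasing_coloring {α ι : Type*} [LinearOrder ι]
    (R : ι → α → α → Prop) (C : Finset ι) (S : Finset α)
    (hcol : ∀ a ∈ S, ∀ b ∈ S, a ≠ b → ∃ t ∈ C, R t a b)
    (hinc : ∀ a ∈ S, ∀ b ∈ S, ∀ c ∈ S, b ≠ c → ∀ t s, R t a b → R t a c → R s b c → t < s) :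
    #S ≤ (#C + 1) ^ (#C + 1) := by
  classical
  induction hk : #C using Nat.strong_induction_on generalizing C S with
  | _ k ih =>
  obtain rfl | ⟨a, ha⟩ := S.eq_empty_or_nonempty
  · simp
  -- the colour of `{a, b}` sorts `S.erase a` into fibres; inside the fibre of colour `τ`
  -- every pair has a colour `> τ`
  set fibre : ι → Finset α := fun τ => (S.erase a).filter (R τ a)
  have hcover : S.erase a ⊆ C.biUnion fibre := by
    intro b hb
    obtain ⟨t, ht, hR⟩ := hcol a ha b (S.mem_erase.1 hb).2 (S.mem_erase.1 hb).1.symm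
    exact mem_biUnion.2 ⟨t, ht, mem_filter.2 ⟨hb, hR⟩⟩
  have hfibre : ∀ τ ∈ C, #(fibre τ) ≤ k ^ k := by
    intro τ hτ
    have hsub : fibre τ ⊆ S := fun b hb => mem_of_mem_erase (mem_filter.1 hb).1
    have hlt : #(C.filter (τ < ·)) < k := hk ▸ card_lt_card
      (filter_ssubset.2 ⟨τ, hτ, lt_irrefl τ⟩)
    calc #(fibre τ) ≤ (#(C.filter (τ < ·)) + 1) ^ (#(C.filter (τ < ·)) + 1) := by
          refine ih _ hlt _ _ (fun b hb c hc hbc => ?_)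
            (fun b hb c hc d hd => hinc b (hsub hb) c (hsub hc) d (hsub hd)) rfl
          obtain ⟨s, hs, hR⟩ := hcol b (hsub hb) c (hsub hc) hbc
          exact ⟨s, mem_filter.2 ⟨hs, hinc a ha b (hsub hb) c (hsub hc) hbc τ s
            (mem_filter.1 hb).2 (mem_filter.1 hc).2 hR⟩, hR⟩
      _ ≤ k ^ (#(C.filter (τ < ·)) + 1) := Nat.pow_le_pow_left hlt _
      _ ≤ k ^ k := Nat.pow_le_pow_right (by omega) hlt
  calc #S = #(S.erase a) + 1 := (card_erase_add_one ha).symm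
    _ ≤ ∑ τ ∈ C, #(fibre τ) + 1 := by
        gcongr; exact (card_le_card hcover).trans card_biUnion_le
    _ ≤ k * k ^ k + 1 := by
        gcongr; simpa [hk] using sum_le_card_nsmul C _ _ hfibre
    _ ≤ (k + 1) ^ (k + 1) := by
        have := Nat.pow_le_pow_left (Nat.le_succ k) k
        have := @Nat.pow_self_pos k
        rw [pow_succ]; nlinarith

end Finset

section TopologicalGroup

variable {G : Type*} [Group G] [TopologicalSpace G] [IsTopologicalGroup G]

theorem exists_isClosed_mem_interior_disjoint_inv_mul [T2Space G] {z : G} (hz : z ≠ 1)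
    {C : Set G} (hC : IsClosed C) (h1C : (1 : G) ∉ C) :
    ∃ K : Set G, IsClosed K ∧ z ∈ interior K ∧ Disjoint (K⁻¹ * K) (C ∪ K) := by
  obtain ⟨A, B, hA, hB, hzA, h1B, hAB⟩ := t2_separation hz
  have hzA' : (z * ·) ⁻¹' A ∈ 𝓝 (1 : G) :=
    (continuous_const_mul z).continuousAt.preimage_mem_nhds (by simpa using hA.mem_nhds hzA)
  obtain ⟨V, hV, hVc, hVinv, hVV⟩ := exists_closed_nhds_one_inv_eq_mul_subset
    (inter_mem (inter_mem (hB.mem_nhds h1B) (hC.isOpen_compl.mem_nhds h1C)) hzA')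
  have hVA : ∀ v ∈ V, z * v ∈ A := fun v hv => (hVV ⟨v, hv, 1, mem_of_mem_nhds hV, mul_one v⟩).2
  refine ⟨(z⁻¹ * ·) ⁻¹' V, hVc.preimage (continuous_const_mul _), ?_, ?_⟩
  · refine mem_interior_iff_mem_nhds.2 <|
      (continuous_const_mul z⁻¹).continuousAt.preimage_mem_nhds ?_
    simpa using hV
  · rw [Set.disjoint_left]
    rintro _ ⟨a, ha, b, hb, rfl⟩ hCK
    have hab : a * b ∈ B ∩ Cᶜ := by
      have hV' : (z⁻¹ * a⁻¹)⁻¹ ∈ V := hVinv ▸ Set.inv_mem_inv.2 ha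
      have := (hVV (Set.mul_mem_mul hV' hb)).1
      rwa [show (z⁻¹ * a⁻¹)⁻¹ * (z⁻¹ * b) = a * b by group] at this
    rcases hCK with hC' | hK
    · exact hab.2 hC'
    · have := hVA _ hK
      rw [mul_inv_cancel_left] at this
      exact Set.disjoint_left.1 hAB this hab.1

theorem exists_seq_mem_interior_disjoint_inv_mul [T2Space G] (z : ℕ → G) (hz : ∀ t, z t ≠ 1) :
    ∃ K : ℕ → Set G, ∀ t, z t ∈ interior (K t) ∧ ∀ s ≤ t, Disjoint ((K t)⁻¹ * K t) (K s) := by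
  choose! L hLc hLz hLd using fun (t : ℕ) (C : Set G) (hC : IsClosed C) (h1C : (1 : G) ∉ C) =>
    exists_isClosed_mem_interior_disjoint_inv_mul (hz t) hC h1C
  let acc : ℕ → Set G := fun t => Nat.rec ∅ (fun t A => A ∪ L t A) t
  have hacc : ∀ t, IsClosed (acc t) ∧ (1 : G) ∉ acc t := by
    intro t
    induction t with
    | zero => exact ⟨isClosed_empty, id⟩
    | succ t ih =>
      have h1L : (1 : G) ∉ L t (acc t) := fun h1 => Set.disjoint_left.1
        (hLd t _ ih.1 ih.2) ⟨1, by simpa using h1, 1, h1, mul_one 1⟩ (Or.inr h1)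
      exact ⟨ih.1.union (hLc t _ ih.1 ih.2), by rintro (h | h); exacts [ih.2 h, h1L h]⟩
  have hmono : ∀ s t, s < t → L s (acc s) ⊆ acc t := by
    intro s t hst
    induction hst with
    | refl => exact Set.subset_union_right
    | step _ ih => exact ih.trans Set.subset_union_left
  refine ⟨fun t => L t (acc t), fun t => ⟨hLz t _ (hacc t).1 (hacc t).2, fun s hs => ?_⟩⟩
  have hdisj := hLd t _ (hacc t).1 (hacc t).2
  rcases hs.lt_or_eq with hs | rfl
  · exact hdisj.mono_right ((hmono s t hs).trans Set.subset_union_left)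
  · exact hdisj.mono_right Set.subset_union_right

end TopologicalGroup

theorem exists_mem_ncard_inter_Iio_le {φ : Filter ℕ} (hφ : φ ≤ cofinite) {f : ℕ → ℕ}
    (hf : ∀ T : ℕ → Finset ℕ, ∃ F ∈ φ, ∀ n, (F ∩ (T n : Set ℕ)).ncard < f n) (h : ℕ → ℕ) :
    ∃ F ∈ φ, ∀ m, (F ∩ Set.Iio (h m)).ncard ≤ m := by
  -- `g k` bounds `h` below `f k + k`, a threshold that is unbounded in `k`
  let g : ℕ → ℕ := fun k => ∑ i ∈ Finset.range (f k + k), h i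
  have hg : ∀ k m, m < f k + k → h m ≤ g k := fun k m hm =>
    Finset.single_le_sum (fun _ _ => Nat.zero_le _) (Finset.mem_range.2 hm)
  obtain ⟨F, hF, hFT⟩ := hf fun k => Finset.range (g (k + 1))
  refine ⟨F ∩ (Set.Iio (g 0))ᶜ, inter_mem hF (hφ (by simp)), fun m => ?_⟩
  have hex : ∃ k, m < f k + k := ⟨m + 1, by omega⟩
  rcases hk : Nat.find hex with _ | k
  · have hm : h m ≤ g 0 := hg 0 m (hk ▸ Nat.find_spec hex)
    have hempty : F ∩ (Set.Iio (g 0))ᶜ ∩ Set.Iio (h m) = ∅ := by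
      ext x
      simp only [Set.mem_inter_iff, Set.mem_compl_iff, Set.mem_Iio, Set.mem_empty_iff_false,
        iff_false]
      omega
    rw [hempty, Set.ncard_empty]
    exact Nat.zero_le m
  · have hm : h m ≤ g (k + 1) := hg (k + 1) m (hk ▸ Nat.find_spec hex)
    have hkm : f k + k ≤ m := not_lt.1 (Nat.find_min hex (by omega))
    calc (F ∩ (Set.Iio (g 0))ᶜ ∩ Set.Iio (h m)).ncard
        ≤ (F ∩ (Finset.range (g (k + 1)) : Set ℕ)).ncard := by
          refine Set.ncard_le_ncard (fun x hx => ⟨hx.1.1, ?_⟩) ((Set.toFinite _).inter_of_right _)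
          simpa using lt_of_lt_of_le hx.2 hm
      _ ≤ m := by have := hFT k; omega

theorem nonrapidFilter_of_le_cofinite (hnorapid : ∀ 𝓤 : Ultrafilter ℕ, ¬ IsRapidUltrafilter 𝓤)
    {φ : Filter ℕ} [φ.NeBot] (hφ : φ ≤ cofinite) : NonrapidFilter φ := by
  intro f
  by_contra! hf
  have h𝓤 : (Ultrafilter.of φ : Filter ℕ) ≤ φ := Ultrafilter.of_le φ
  refine hnorapid (Ultrafilter.of φ) ⟨le_cofinite_iff_ker.1 (h𝓤.trans hφ), fun h => ?_⟩
  obtain ⟨F, hF, hFh⟩ := exists_mem_ncard_inter_Iio_le hφ hf h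
  exact ⟨F, h𝓤 hF, hFh⟩

-- Points are tagged with their block via the sigma type, so no index has to be chosen for them.
def blockFilter {X : Type*} [TopologicalSpace X] (Yp : ℕ → Set X) (x : X) : Filter ℕ :=
  map Sigma.fst (comap (fun p : Σ n, Yp n => (p.2 : X)) (𝓝 x))

section Topology

variable {X : Type*} [TopologicalSpace X] {x : X}

theorem setOf_inter_nonempty_mem_blockFilter {Yp : ℕ → Set X} {U : Set X} (hU : U ∈ 𝓝 x) :
    {n | (Yp n ∩ U).Nonempty} ∈ blockFilter Yp x :=
  mem_map.2 (mem_comap.2 ⟨U, hU, fun p hp => ⟨p.2, p.2.2, hp⟩⟩)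

theorem blockFilter_neBot {Yp : ℕ → Set X} (hx : x ∈ closure (⋃ n, Yp n)) :
    (blockFilter Yp x).NeBot := by
  refine NeBot.map (comap_neBot fun U hU => ?_) _
  obtain ⟨y, hyU, hy⟩ := mem_closure_iff_nhds.1 hx U hU
  obtain ⟨n, hn⟩ := Set.mem_iUnion.1 hy
  exact ⟨⟨n, y, hn⟩, hyU⟩

theorem blockFilter_le_cofinite [T1Space X] {Yp : ℕ → Set X} (hfin : ∀ n, (Yp n).Finite)
    (hx : x ∉ ⋃ n, Yp n) : blockFilter Yp x ≤ cofinite := by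
  intro S hS
  have hB : (⋃ n ∈ Sᶜ, Yp n).Finite := (mem_cofinite.1 hS).biUnion fun n _ => hfin n
  refine mem_map.2 (mem_comap.2 ⟨_, hB.isClosed.isOpen_compl.mem_nhds ?_, fun p hp => ?_⟩)
  · exact fun h => hx (Set.iUnion₂_subset_iUnion _ _ h)
  · by_contra hpS
    exact hp (Set.mem_biUnion hpS p.2.2)

theorem exists_mem_nhds_inter_iUnion_subset_singleton [T1Space X] {Ξ : ℕ → Set X} {t : ℕ}
    (hfin : ∀ n < t, (Ξ n).Finite) {K : Set X} (hK : ∀ n, t ≤ n → Disjoint K (Ξ n))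
    (hx : K ∈ 𝓝 x) : ∃ W ∈ 𝓝 x, W ∩ ⋃ n, Ξ n ⊆ {x} := by
  have hfin' : ((⋃ n < t, Ξ n) \ {x}).Finite :=
    ((Set.finite_lt_nat t).biUnion fun n hn => hfin n hn).sdiff
  refine ⟨K ∩ ((⋃ n < t, Ξ n) \ {x})ᶜ,
    inter_mem hx (hfin'.isClosed.isOpen_compl.mem_nhds fun h => h.2 rfl), ?_⟩
  rintro y ⟨⟨hyK, hy⟩, hyΞ⟩
  obtain ⟨n, hn⟩ := Set.mem_iUnion.1 hyΞ
  rcases lt_or_ge n t with hnt | hnt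
  · by_contra hyx
    exact hy ⟨Set.mem_iUnion₂.2 ⟨n, hnt, hn⟩, hyx⟩
  · exact absurd hn (Set.disjoint_left.1 (hK n hnt) hyK)

theorem isDiscreteSubset_of_inter_subset_singleton {D : Set X}
    (h : ∀ x ∈ D, ∃ U ∈ 𝓝 x, U ∩ D ⊆ {x}) : IsDiscreteSubset D :=
  fun x hx => (h x hx).imp fun _ ⟨hU, hUD⟩ =>
    ⟨hU, hUD.antisymm (Set.singleton_subset_iff.2 ⟨mem_of_mem_nhds hU, hx⟩)⟩

theorem not_isLimitPoint_of_inter_subset_singleton {D U : Set X} (hU : U ∈ 𝓝 x)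
    (h : U ∩ D ⊆ {x}) : ¬ IsLimitPoint x D := fun hx =>
  let ⟨_, ⟨hyD, hyx⟩, hyU⟩ := hx U hU
  hyx (h ⟨hyU, hyD⟩)

end Topology

theorem isLimitPoint_one_of_inter_inv_mul_nonempty {G : Type*} [Group G] [TopologicalSpace G]
    [IsTopologicalGroup G] {D : Set G} (h1 : (1 : G) ∉ D)
    (h : ∀ U ∈ 𝓝 (1 : G), (D ∩ (U⁻¹ * U)).Nonempty) : IsLimitPoint 1 D := by
  intro V hV
  obtain ⟨U, hU, -, hUinv, hUU⟩ := exists_closed_nhds_one_inv_eq_mul_subset hV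
  obtain ⟨y, hyD, hyU⟩ := h U hU
  rw [hUinv] at hyU
  exact ⟨y, ⟨hyD, fun hy => h1 (Set.mem_singleton_iff.1 hy ▸ hyD)⟩, hUU hyU⟩

section CrossQuotient

variable {G : Type*} [Group G] (Yp : ℕ → Set G)

def crossQuotient (I : Finset ℕ) : Set G :=
  ⋃ i ∈ I, ⋃ j ∈ I, ⋃ (_ : i ≠ j), (Yp i)⁻¹ * Yp j

def thinnedCrossQuotient (T : ℕ → Finset ℕ) (K : ℕ → Set G) : Set G :=
  ⋃ n, crossQuotient Yp (T n) \ ⋃ t ≤ n, K t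

variable {Yp}

theorem crossQuotient_finite (hfin : ∀ n, (Yp n).Finite) (I : Finset ℕ) :
    (crossQuotient Yp I).Finite :=
  I.finite_toSet.biUnion fun i _ => I.finite_toSet.biUnion fun j _ =>
    Set.finite_iUnion fun _ => ((hfin i).inv).mul (hfin j)

theorem one_notMem_thinnedCrossQuotient (hdisj : ∀ i j : ℕ, i ≠ j → Disjoint (Yp i) (Yp j))
    (T : ℕ → Finset ℕ) (K : ℕ → Set G) : (1 : G) ∉ thinnedCrossQuotient Yp T K := by
  simp only [thinnedCrossQuotient, crossQuotient, Set.mem_iUnion, Set.mem_sdiff]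
  rintro ⟨n, ⟨i, -, j, -, hij, a, ha, b, hb, hab⟩, -⟩
  exact Set.disjoint_left.1 (hdisj i j hij) ha (eq_inv_of_mul_eq_one_right hab ▸ hb)

theorem thinnedCrossQuotient_subset (T : ℕ → Finset ℕ) (K : ℕ → Set G) :
    thinnedCrossQuotient Yp T K ⊆ ⋃ (i : ℕ) (j : ℕ) (_ : i ≠ j), (Yp i)⁻¹ * Yp j := by
  simp only [thinnedCrossQuotient, crossQuotient, Set.iUnion_subset_iff]
  intro n x hx
  obtain ⟨i, -, j, hij, -, hx⟩ : ∃ i ∈ T n, ∃ j, i ≠ j ∧ j ∈ T n ∧ x ∈ (Yp i)⁻¹ * Yp j := by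
    simpa using hx.1
  exact Set.mem_iUnion₂.2 ⟨i, j, Set.mem_iUnion.2 ⟨hij, hx⟩⟩

open Finset in
theorem exists_inv_mul_notMem_iUnion {K : ℕ → Set G}
    (hK : ∀ t, ∀ s ≤ t, Disjoint ((K t)⁻¹ * K t) (K s)) {α : Type*} (y : α → G) (n : ℕ)
    {H : Finset α} (hH : (n + 2) ^ (n + 2) < #H) :
    ∃ a ∈ H, ∃ b ∈ H, a ≠ b ∧ (y a)⁻¹ * y b ∉ ⋃ t ≤ n, K t := by
  by_contra! hall
  refine hH.not_ge ?_
  simpa using card_le_of_increasing_coloring (fun t a b => (y a)⁻¹ * y b ∈ K t) (range (n + 1))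
    H (fun a ha b hb hab => by simpa [Nat.lt_succ_iff] using hall a ha b hb hab)
    fun a _ b _ c _ _ t s hab hac hbc => lt_of_not_ge fun hst => Set.disjoint_left.1 (hK t s hst)
      (by simpa [mul_assoc] using Set.mul_mem_mul (Set.inv_mem_inv.2 hab) hac) hbc

variable [TopologicalSpace G] {Yp : ℕ → Set G} {T : ℕ → Finset ℕ} {K : ℕ → Set G}

theorem thinnedCrossQuotient_inter_inv_mul_nonempty
    (hK : ∀ t, ∀ s ≤ t, Disjoint ((K t)⁻¹ * K t) (K s))
    (hT : ∀ F ∈ blockFilter Yp 1, ∃ n, (n + 2) ^ (n + 2) + 1 ≤ (F ∩ (T n : Set ℕ)).ncard)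
    {U : Set G} (hU : U ∈ 𝓝 (1 : G)) : (thinnedCrossQuotient Yp T K ∩ (U⁻¹ * U)).Nonempty := by
  classical
  obtain ⟨n, hn⟩ := hT _ (setOf_inter_nonempty_mem_blockFilter hU)
  set H := (T n).filter fun i => (Yp i ∩ U).Nonempty
  have hH : (n + 2) ^ (n + 2) < H.card := by
    rw [Set.inter_comm] at hn
    rwa [← Set.ncard_coe_finset, Finset.coe_filter]
  choose! y hy using fun i (hi : i ∈ H) => (Finset.mem_filter.1 hi).2
  obtain ⟨a, ha, b, hb, hab, hnot⟩ := exists_inv_mul_notMem_iUnion hK y n hH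
  refine ⟨(y a)⁻¹ * y b, Set.mem_iUnion.2 ⟨n, ?_, hnot⟩,
    Set.mul_mem_mul (Set.inv_mem_inv.2 (hy a ha).2) (hy b hb).2⟩
  simp only [crossQuotient, Set.mem_iUnion]
  exact ⟨a, (Finset.mem_filter.1 ha).1, b, (Finset.mem_filter.1 hb).1, hab,
    Set.mul_mem_mul (Set.inv_mem_inv.2 (hy a ha).1) (hy b hb).1⟩

theorem exists_mem_nhds_inter_thinnedCrossQuotient_subset_singleton [T1Space G]
    (hfin : ∀ n, (Yp n).Finite) {x : G} {t : ℕ} (hx : K t ∈ 𝓝 x) :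
    ∃ W ∈ 𝓝 x, W ∩ thinnedCrossQuotient Yp T K ⊆ {x} :=
  exists_mem_nhds_inter_iUnion_subset_singleton (fun _ _ => (crossQuotient_finite hfin _).sdiff)
    (fun _ htn => Set.disjoint_left.2 fun _ hy hyΞ => hyΞ.2 (Set.mem_biUnion htn hy)) hx

end CrossQuotient

theorem stmt_10_general {G : Type*} [Group G] [Countable G]
    [TopologicalSpace G] [IsTopologicalGroup G] [T2Space G]
    (hnorapid : ∀ 𝓤 : Ultrafilter ℕ, ¬ IsRapidUltrafilter 𝓤)
    (Y : Set G) (hY : (1 : G) ∈ closure Y \ Y)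
    (Yp : ℕ → Set G) (hfin : ∀ n, (Yp n).Finite)
    (hdisj : ∀ i j : ℕ, i ≠ j → Disjoint (Yp i) (Yp j))
    (hunion : ⋃ n, Yp n = Y) :
    ∃ ξ : Set G, ξ ⊆ {(1 : G)}ᶜ ∧
      (IsDiscreteSubset ξ ∧ IsLimitPoint 1 ξ ∧ ∀ x, IsLimitPoint x ξ → x = 1) ∧
      ξ ⊆ ⋃ (i : ℕ) (j : ℕ) (_ : i ≠ j), (Yp i)⁻¹ * Yp j := by
  subst hunion
  have := blockFilter_neBot hY.1
  obtain ⟨T, hT⟩ := nonrapidFilter_of_le_cofinite hnorapid (blockFilter_le_cofinite hfin hY.2)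
    fun n => (n + 2) ^ (n + 2) + 1
  have hne : ({1}ᶜ : Set G).Nonempty := by
    obtain ⟨y, hy⟩ : (⋃ n, Yp n).Nonempty :=
      Set.nonempty_iff_ne_empty.2 fun h => by simp [h] at hY
    exact ⟨y, fun h => hY.2 (Set.mem_singleton_iff.1 h ▸ hy)⟩
  obtain ⟨z, hz⟩ := (Set.to_countable _).exists_eq_range hne
  obtain ⟨K, hK⟩ := exists_seq_mem_interior_disjoint_inv_mul z fun t =>
    (hz ▸ Set.mem_range_self t : z t ∈ ({1}ᶜ : Set G))
  have h1 := one_notMem_thinnedCrossQuotient hdisj T K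
  have hloc : ∀ x : G, x ≠ 1 → ∃ W ∈ 𝓝 x, W ∩ thinnedCrossQuotient Yp T K ⊆ {x} := by
    intro x hx
    obtain ⟨t, rfl⟩ : x ∈ Set.range z := hz ▸ hx
    exact exists_mem_nhds_inter_thinnedCrossQuotient_subset_singleton hfin
      (mem_interior_iff_mem_nhds.1 (hK t).1)
  refine ⟨thinnedCrossQuotient Yp T K, fun x hx h => h1 (Set.mem_singleton_iff.1 h ▸ hx),
    ⟨?_, ?_, ?_⟩, thinnedCrossQuotient_subset T K⟩
  · exact isDiscreteSubset_of_inter_subset_singleton fun x hx =>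
      hloc x (ne_of_mem_of_not_mem hx h1)
  · exact isLimitPoint_one_of_inter_inv_mul_nonempty h1 fun U hU =>
      thinnedCrossQuotient_inter_inv_mul_nonempty (fun t => (hK t).2) hT hU
  · intro x hx
    by_contra hx1
    obtain ⟨W, hW, hWξ⟩ := hloc x hx1
    exact not_isLimitPoint_of_inter_subset_singleton hW hWξ hx

theorem stmt_10 {G : Type*} [Group G] [Countable G] [Infinite G]
    [TopologicalSpace G] [IsTopologicalGroup G] [T2Space G]
    (hnorapid : ∀ 𝓤 : Ultrafilter ℕ, ¬ IsRapidUltrafilter 𝓤)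
    (Y : Set G) (hY : (1 : G) ∈ closure Y \ Y)
    (Yp : ℕ → Set G) (hfin : ∀ n, (Yp n).Finite)
    (hdisj : ∀ i j : ℕ, i ≠ j → Disjoint (Yp i) (Yp j))
    (hunion : ⋃ n, Yp n = Y) :
    ∃ ξ : Set G, ξ ⊆ {(1 : G)}ᶜ ∧
      (IsDiscreteSubset ξ ∧ IsLimitPoint 1 ξ ∧ ∀ x, IsLimitPoint x ξ → x = 1) ∧
      ξ ⊆ ⋃ (i : ℕ) (j : ℕ) (_ : i ≠ j), (Yp i)⁻¹ * Yp j :=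
  stmt_10_general hnorapid Y hY Yp hfin hdisj hunion
end

section
/- Let 𝓤 be a free ultrafilter on ω, and let φ : ω → ω be a monotone function such that φ(n) > n for all n ∈ ω. Then there exist monotone sequences (a_n)_{n∈ω} and (b_n)_{n∈ω} in ω such that a_n < b_n < φ(b_n) < a_{n+1} for all n ∈ ω and ⋃_{n∈ω} [a_n, b_n] ∈ 𝓤. -/
/-!
Cut `ℕ` into consecutive blocks `[c k, φ (c k)]`, where `c = blockStart φ`, i.e.
`c 0 = 0` and `c (k + 1) = φ (c k) + 1`.
The ultrafilter contains either the union of the even-numbered blocks or that of the odd-numbered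
ones; take `[a n, b n]` to be the `n`-th block of that parity. Between two blocks of the same
parity lies a whole block `[c k', φ (c k')]` with `b n < c k'`, so monotonicity of `φ` gives
`φ (b n) ≤ φ (c k') < a (n + 1)`.
-/

open Set

def blockStart (φ : ℕ → ℕ) : ℕ → ℕ
  | 0 => 0
  | k + 1 => φ (blockStart φ k) + 1

def parityBlocks (φ : ℕ → ℕ) (t : ℕ) : Set ℕ :=
  ⋃ n, Icc (blockStart φ (2 * n + t)) (φ (blockStart φ (2 * n + t)))

section

variable {φ : ℕ → ℕ}

lemma blockStart_succ (k : ℕ) : blockStart φ (k + 1) = φ (blockStart φ k) + 1 := rfl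

lemma strictMono_blockStart (hφ : ∀ n, n < φ n) : StrictMono (blockStart φ) :=
  strictMono_nat_of_lt_succ fun k => by
    rw [blockStart_succ]
    exact Nat.lt_succ_of_lt (hφ _)

lemma iUnion_Icc_blockStart (hφ : ∀ n, n < φ n) :
    ⋃ k, Icc (blockStart φ k) (φ (blockStart φ k)) = univ := by
  have hc := strictMono_blockStart hφ
  have h := iUnion_Ico_map_succ_eq_Ici (fun k => hc.monotone (Nat.zero_le k))
    hc.not_bddAbove_range_of_wellFoundedLT
  change _ = Ici ⊥ at h
  rw [Set.Ici_bot] at h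
  simpa only [Order.succ_eq_add_one, blockStart_succ, Ico_add_one_right_eq_Icc] using h

lemma parityBlocks_zero_union_one (hφ : ∀ n, n < φ n) :
    parityBlocks φ 0 ∪ parityBlocks φ 1 = univ := by
  rw [eq_univ_iff_forall]
  intro m
  obtain ⟨k, hk⟩ := mem_iUnion.mp ((iUnion_Icc_blockStart hφ).symm ▸ mem_univ m)
  obtain ⟨n, rfl | rfl⟩ := Nat.even_or_odd' k
  · exact Or.inl (mem_iUnion.mpr ⟨n, hk⟩)
  · exact Or.inr (mem_iUnion.mpr ⟨n, hk⟩)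

lemma apply_apply_blockStart_lt (hmono : Monotone φ) (k : ℕ) :
    φ (φ (blockStart φ k)) < blockStart φ (k + 2) := by
  have h : φ (blockStart φ k) ≤ blockStart φ (k + 1) :=
    (Nat.le_succ _).trans_eq (blockStart_succ k).symm
  rw [blockStart_succ (k + 1)]
  exact Nat.lt_succ_of_le (hmono h)

end

theorem stmt_15_general (𝓤 : Ultrafilter ℕ)
    (φ : ℕ → ℕ) (hmono : Monotone φ) (hgt : ∀ n : ℕ, n < φ n) :
    ∃ a b : ℕ → ℕ, Monotone a ∧ Monotone b ∧
      (∀ n : ℕ, a n < b n ∧ b n < φ (b n) ∧ φ (b n) < a (n + 1)) ∧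
      (⋃ n, Set.Icc (a n) (b n)) ∈ 𝓤 := by
  obtain ⟨t, ht⟩ : ∃ t, parityBlocks φ t ∈ 𝓤 := by
    have huniv : parityBlocks φ 0 ∪ parityBlocks φ 1 ∈ 𝓤 := by
      rw [parityBlocks_zero_union_one hgt]
      exact Filter.univ_mem
    rcases Ultrafilter.union_mem_iff.mp huniv with h | h
    exacts [⟨0, h⟩, ⟨1, h⟩]
  have ha : Monotone fun n => blockStart φ (2 * n + t) := fun i j hij =>
    (strictMono_blockStart hgt).monotone (by omega)
  refine ⟨fun n => blockStart φ (2 * n + t), fun n => φ (blockStart φ (2 * n + t)),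
    ha, hmono.comp ha, fun n => ⟨hgt _, hgt _, ?_⟩, ht⟩
  simpa only [show 2 * (n + 1) + t = 2 * n + t + 2 by ring] using
    apply_apply_blockStart_lt hmono (2 * n + t)

theorem stmt_15 (𝓤 : Ultrafilter ℕ) (hfree : IsFreeFilter (𝓤 : Filter ℕ))
    (φ : ℕ → ℕ) (hmono : Monotone φ) (hgt : ∀ n : ℕ, n < φ n) :
    ∃ a b : ℕ → ℕ, Monotone a ∧ Monotone b ∧
      (∀ n : ℕ, a n < b n ∧ b n < φ (b n) ∧ φ (b n) < a (n + 1)) ∧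
      (⋃ n, Set.Icc (a n) (b n)) ∈ 𝓤 :=
  stmt_15_general 𝓤 φ hmono hgt
end

section
/- Let 𝓤 be a free ultrafilter on the set [ω]^{<ω} of finite subsets of ω, and let ξ = {X_n : n ∈ ω} ∈ 𝓤 be a set of nonempty finite subsets of ω with lim_{n→∞} min X_n = ∞. Then there exists a sequence (𝒴_n)_{n∈ω} of finite subsets of ξ such that ⋃_{n∈ω} 𝒴_n ∈ 𝓤 and (⋃𝒴_i) ∩ (⋃𝒴_j) = ∅ for any distinct i, j ∈ ω (where ⋃𝒴_i denotes the union, as a subset of ω, of the finite sets belonging to 𝒴_i). -/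
open Function

theorem Ultrafilter.exists_iUnion_two_mul_add_mem {α : Type*} (𝓤 : Ultrafilter α)
    {s : ℕ → Set α} (hs : ⋃ n, s n ∈ 𝓤) : ∃ r, ⋃ n, s (2 * n + r) ∈ 𝓤 := by
  have hsplit : ⋃ n, s n ⊆ (⋃ n, s (2 * n + 0)) ∪ ⋃ n, s (2 * n + 1) := by
    refine Set.iUnion_subset fun n x hx => ?_
    obtain ⟨k, rfl | rfl⟩ := Nat.even_or_odd' n
    · exact Or.inl (Set.mem_iUnion.2 ⟨k, hx⟩)
    · exact Or.inr (Set.mem_iUnion.2 ⟨k, hx⟩)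
  rcases Ultrafilter.union_mem_iff.1 (𝓤.toFilter.mem_of_superset hs hsplit) with h | h
  exacts [⟨0, h⟩, ⟨1, h⟩]

theorem pairwise_disjoint_two_mul_add_of_subset_Ico {K : ℕ → ℕ} (hK : Monotone K)
    {t : ℕ → Finset ℕ} (ht : ∀ n, t n ⊆ Finset.Ico (K n) (K (n + 2))) (r : ℕ) :
    Pairwise (Disjoint on fun n => t (2 * n + r)) := by
  refine (pairwise_disjoint_on _).2 fun i j hij => ?_
  have hgap : K (2 * i + r + 2) ≤ K (2 * j + r) := hK (by omega)
  refine Finset.disjoint_left.2 fun x hxi hxj => ?_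
  have := Finset.mem_Ico.1 (ht _ hxi)
  have := Finset.mem_Ico.1 (ht _ hxj)
  omega

theorem StrictMono.exists_mem_Ico_succ {K : ℕ → ℕ} (hK : StrictMono K) {m : ℕ} (hm : K 0 ≤ m) :
    ∃ n, m ∈ Set.Ico (K n) (K (n + 1)) := by
  have hcover := iUnion_Ico_map_succ_eq_Ici (f := K) (fun n => hK.monotone (Nat.zero_le n))
    hK.not_bddAbove_range_of_wellFoundedLT
  simpa using hcover.ge (Set.mem_Ici.2 hm)

section Blocks

variable {ξ : Set (Finset ℕ)} (hlim : ∀ k : ℕ, {X ∈ ξ | ∃ m ∈ X, m ≤ k}.Finite)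

include hlim in
theorem exists_bound_of_finite_meets :
    ∃ b : ℕ → ℕ, ∀ k, ∀ X ∈ ξ, (∃ m ∈ X, m ≤ k) → ∀ x ∈ X, x < b k := by
  refine ⟨fun k => (hlim k).toFinset.sup (fun X => X.sup id) + 1, fun k X hX hk x hx => ?_⟩
  have hXk : X ∈ (hlim k).toFinset := (hlim k).mem_toFinset.2 ⟨hX, hk⟩
  have := (Finset.le_sup (f := id) hx).trans (Finset.le_sup (f := fun X => X.sup id) hXk)
  exact Nat.lt_succ_of_le this

/-- The members of `ξ` whose least element lies in `[K n, K (n + 1)]`. -/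
noncomputable def block (K : ℕ → ℕ) (n : ℕ) : Finset (Finset ℕ) :=
  (hlim (K (n + 1))).toFinset.filter fun X => ∀ m ∈ X, K n ≤ m

variable {hlim}

theorem mem_block {K : ℕ → ℕ} {n : ℕ} {X : Finset ℕ} :
    X ∈ block hlim K n ↔ X ∈ ξ ∧ (∃ m ∈ X, m ≤ K (n + 1)) ∧ ∀ m ∈ X, K n ≤ m := by
  simp [block, and_assoc]

theorem block_subset (K : ℕ → ℕ) (n : ℕ) : (block hlim K n : Set (Finset ℕ)) ⊆ ξ :=
  fun _ hX => (mem_block.1 hX).1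

theorem biUnion_block_subset_Ico {b K : ℕ → ℕ}
    (hb : ∀ k, ∀ X ∈ ξ, (∃ m ∈ X, m ≤ k) → ∀ x ∈ X, x < b k)
    (hK : ∀ n, b (K n) ≤ K (n + 1)) (n : ℕ) :
    (block hlim K n).biUnion id ⊆ Finset.Ico (K n) (K (n + 2)) := by
  intro x hx
  obtain ⟨X, hX, hxX⟩ := Finset.mem_biUnion.1 hx
  obtain ⟨hXξ, hmeet, hlow⟩ := mem_block.1 hX
  exact Finset.mem_Ico.2 ⟨hlow x hxX, (hb _ X hXξ hmeet x hxX).trans_le (hK _)⟩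

theorem exists_mem_block {K : ℕ → ℕ} (hK : StrictMono K) (hK0 : K 0 = 0) {X : Finset ℕ}
    (hX : X ∈ ξ) (hne : X.Nonempty) : ∃ n, X ∈ block hlim K n := by
  obtain ⟨n, hlo, hhi⟩ := hK.exists_mem_Ico_succ (hK0 ▸ Nat.zero_le (X.min' hne))
  exact ⟨n, mem_block.2 ⟨hX, ⟨_, X.min'_mem hne, hhi.le⟩,
    fun m hm => hlo.trans (X.min'_le m hm)⟩⟩

end Blocks

theorem stmt_16_general (𝓤 : Ultrafilter (Finset ℕ))
    (ξ : Set (Finset ℕ)) (hξ : ξ ∈ 𝓤) (hne : ∀ X ∈ ξ, X.Nonempty)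
    -- `min Xₙ → ∞`: for each `k` only finitely many members of `ξ` meet `[0, k]`
    (hlim : ∀ k : ℕ, {X ∈ ξ | ∃ m ∈ X, m ≤ k}.Finite) :
    ∃ 𝒴 : ℕ → Finset (Finset ℕ),
      (∀ n, (𝒴 n : Set (Finset ℕ)) ⊆ ξ) ∧
      (⋃ n, (𝒴 n : Set (Finset ℕ))) ∈ 𝓤 ∧
      ∀ i j : ℕ, i ≠ j → Disjoint ((𝒴 i).biUnion id) ((𝒴 j).biUnion id) := by
  obtain ⟨b, hb⟩ := exists_bound_of_finite_meets hlim
  set K : ℕ → ℕ := fun n => (fun k => k + 1 + b k)^[n] 0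
  have hK_succ (n : ℕ) : K (n + 1) = K n + 1 + b (K n) := iterate_succ_apply' _ n 0
  have hK : StrictMono K := strictMono_nat_of_lt_succ fun n => by rw [hK_succ]; omega
  have hcover : ξ ⊆ ⋃ n, (block hlim K n : Set (Finset ℕ)) := fun X hX =>
    Set.mem_iUnion.2 (exists_mem_block hK rfl hX (hne X hX))
  obtain ⟨r, hr⟩ := 𝓤.exists_iUnion_two_mul_add_mem (𝓤.toFilter.mem_of_superset hξ hcover)
  refine ⟨fun n => block hlim K (2 * n + r), fun n => block_subset K _, hr, ?_⟩
  exact pairwise_disjoint_two_mul_add_of_subset_Ico hK.monotone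
    (biUnion_block_subset_Ico hb fun n => by rw [hK_succ]; omega) r

theorem stmt_16 (𝓤 : Ultrafilter (Finset ℕ))
    (hfree : IsFreeFilter (𝓤 : Filter (Finset ℕ)))
    (ξ : Set (Finset ℕ)) (hξ : ξ ∈ 𝓤) (hne : ∀ X ∈ ξ, X.Nonempty)
    -- `min Xₙ → ∞`: for each `k` only finitely many members of `ξ` meet `[0, k]`
    (hlim : ∀ k : ℕ, {X ∈ ξ | ∃ m ∈ X, m ≤ k}.Finite) :
    ∃ 𝒴 : ℕ → Finset (Finset ℕ),
      (∀ n, (𝒴 n : Set (Finset ℕ)) ⊆ ξ) ∧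
      (⋃ n, (𝒴 n : Set (Finset ℕ))) ∈ 𝓤 ∧
      ∀ i j : ℕ, i ≠ j → Disjoint ((𝒴 i).biUnion id) ((𝒴 j).biUnion id) :=
  stmt_16_general 𝓤 ξ hξ hne hlim
end
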